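/- arXiv:1902.04821 — 7 statements merged into one kernel-verified Lean document; each statement's English description precedes it below -/
import Mathlib

section
/- Suppose the initial data satisfies ρ⁰ᵢ ≥ 0 for every i ∈ ℕ and s⁰ ≤ 1. Then for every n ∈ ℕ and every i ∈ ℕ one has ρⁿᵢ ≥ 0 and 0 ≤ sⁿ ≤ 1. -/
/-- Positivity and boundedness of the discrete scheme for the
age-structured adhesion model (Lemma `lem.muze.bounds`, first part).
Under the CFL condition `Δt = ε·Δa`, if the initial data satisfies `ρ⁰ᵢ ≥ 0`
for every `i` and `s⁰ ≤ 1`, then for every `n` and `i` one has `ρⁿᵢ ≥ 0` and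
`0 ≤ sⁿ ≤ 1`. -/
theorem stmt0
    (Δa ε ζmin ζmax βmin βmax : ℝ)
    (hΔa : 0 < Δa) (hε : 0 < ε)
    (ζ : ℕ → ℕ → ℝ) (β : ℕ → ℝ)
    (hζmin : 0 < ζmin)
    (hζ : ∀ n i, ζmin ≤ ζ n i ∧ ζ n i ≤ ζmax)
    (hβmin : 0 < βmin)
    (hβ : ∀ n, βmin ≤ β n ∧ β n ≤ βmax)
    (ρ : ℕ → ℕ → ℝ)
    (hsum : Summable (ρ 0))
    (hrec : ∀ n i, ρ (n+1) (i+1) = ρ n i / (1 + Δa * ζ (n+1) (i+1)))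
    (hbdry : ∀ n, ρ (n+1) 0 =
      β (n+1) / (1 + Δa * (β (n+1) + ζ (n+1) 0)) * (1 - Δa * ∑' i, ρ (n+1) (i+1)))
    (s : ℕ → ℝ) (hs : ∀ n, s n = Δa * ∑' i, ρ n i)
    (hinit_pos : ∀ i, 0 ≤ ρ 0 i) (hinit_s : s 0 ≤ 1) :
    ∀ n i, 0 ≤ ρ n i ∧ 0 ≤ s n ∧ s n ≤ 1 := by
  have key : ∀ n, (∀ i, 0 ≤ ρ n i) ∧ Summable (ρ n) ∧ s n ≤ 1 := by
    intro n
    induction n with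
    | zero => exact ⟨hinit_pos, hsum, hinit_s⟩
    | succ n ih =>
      obtain ⟨hpos, hsm, hsle⟩ := ih
      have hζpos : ∀ m i, 0 < ζ m i := fun m i => lt_of_lt_of_le hζmin (hζ m i).1
      have hden : ∀ i, (0:ℝ) < 1 + Δa * ζ (n+1) (i+1) := by
        intro i
        have := hζpos (n+1) (i+1)
        nlinarith
      have htail_nonneg : ∀ i, 0 ≤ ρ (n+1) (i+1) := by
        intro i; rw [hrec]
        exact div_nonneg (hpos i) (hden i).le
      have htail_le : ∀ i, ρ (n+1) (i+1) ≤ ρ n i := by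
        intro i; rw [hrec]
        refine div_le_self (hpos i) ?_
        have := hζpos (n+1) (i+1)
        nlinarith
      have hsm' : Summable (fun i => ρ (n+1) (i+1)) :=
        Summable.of_nonneg_of_le htail_nonneg htail_le hsm
      have hT_nonneg : (0:ℝ) ≤ ∑' i, ρ (n+1) (i+1) := tsum_nonneg htail_nonneg
      have hT_le : ∑' i, ρ (n+1) (i+1) ≤ ∑' i, ρ n i :=
        Summable.tsum_le_tsum (fun i => htail_le i) hsm' hsm
      have hsn_eq : s n = Δa * ∑' i, ρ n i := hs n
      have h1 : Δa * ∑' i, ρ (n+1) (i+1) ≤ 1 := by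
        have h2 : Δa * ∑' i, ρ (n+1) (i+1) ≤ Δa * ∑' i, ρ n i :=
          mul_le_mul_of_nonneg_left hT_le hΔa.le
        linarith [hsn_eq ▸ hsle]
      have hu_nonneg : (0:ℝ) ≤ 1 - Δa * ∑' i, ρ (n+1) (i+1) := by linarith
      have hbpos : 0 < β (n+1) := lt_of_lt_of_le hβmin (hβ (n+1)).1
      have hzpos := hζpos (n+1) 0
      have hbden : (0:ℝ) < 1 + Δa * (β (n+1) + ζ (n+1) 0) := by nlinarith
      have hc_nonneg : 0 ≤ β (n+1) / (1 + Δa * (β (n+1) + ζ (n+1) 0)) :=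
        div_nonneg hbpos.le hbden.le
      have h0_nonneg : 0 ≤ ρ (n+1) 0 := by
        rw [hbdry]; exact mul_nonneg hc_nonneg hu_nonneg
      have hall : ∀ i, 0 ≤ ρ (n+1) i := by
        intro i
        cases i with
        | zero => exact h0_nonneg
        | succ j => exact htail_nonneg j
      have hsm2 : Summable (ρ (n+1)) := (summable_nat_add_iff 1).mp hsm'
      have hsplit : ∑' i, ρ (n+1) i = ρ (n+1) 0 + ∑' i, ρ (n+1) (i+1) :=
        Summable.tsum_eq_zero_add hsm2
      refine ⟨hall, hsm2, ?_⟩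
      rw [hs (n+1), hsplit, hbdry]
      set T := ∑' i, ρ (n+1) (i+1) with hT
      have hc_le : Δa * (β (n+1) / (1 + Δa * (β (n+1) + ζ (n+1) 0))) ≤ 1 := by
        rw [mul_div_assoc']
        rw [div_le_one hbden]
        nlinarith
      set c := β (n+1) / (1 + Δa * (β (n+1) + ζ (n+1) 0)) with hc
      nlinarith [mul_nonneg hc_nonneg (mul_nonneg hΔa.le hT_nonneg)]
  intro n i
  obtain ⟨hpos, hsm, hsle⟩ := key n
  refine ⟨hpos i, ?_, hsle⟩
  rw [hs n]
  exact mul_nonneg hΔa.le (tsum_nonneg hpos)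
end

section
/- Suppose the initial data satisfies ρ⁰ᵢ ≥ 0 for every i ∈ ℕ and s⁰ ≤ 1, and suppose there exists a constant μ with 0 < μ < min(s⁰, β_min/(β_min + ζ_max)). Then sⁿ > μ for every n ∈ ℕ. -/
/-- Arithmetic key step. -/
lemma stmt1_key (Δa ζmax βmin μ A c : ℝ)
    (hΔa : 0 < Δa) (hζ : 0 < ζmax) (hβ : 0 < βmin) (hμ : 0 < μ)
    (hμ1 : μ * (βmin + ζmax) < βmin)
    (hA : μ < A * (1 + Δa * ζmax))
    (hc1 : c < 1)
    (hc2 : Δa * βmin ≤ c * (1 + Δa * (βmin + ζmax))) :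
    μ < A * (1 - c) + c := by
  have hK : 0 < 1 + Δa * ζmax := by positivity
  have hμlt1 : μ < 1 := by nlinarith [mul_pos hμ hζ, mul_pos hμ hβ]
  have h5 : μ * (Δa * ζmax) ≤ c * (1 + Δa * ζmax - μ) := by
    have hpos : (0:ℝ) < 1 + Δa * βmin + Δa * ζmax := by positivity
    nlinarith [mul_nonneg (sub_nonneg.2 hc2) (by nlinarith : (0:ℝ) ≤ 1 + Δa * ζmax - μ),
      mul_pos (mul_pos hΔa hK) (sub_pos.2 hμ1)]
  nlinarith [mul_pos (sub_pos.2 hA) (sub_pos.2 hc1)]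

/-- Lower bound on the discrete zero order moment
(Lemma `lem.muze.bounds`, second part). If `ρ⁰ᵢ ≥ 0`, `s⁰ ≤ 1`, and
`0 < μ < min(s⁰, β_min/(β_min + ζ_max))`, then `sⁿ > μ` for every `n`. -/
theorem stmt1
    (Δa ε ζmin ζmax βmin βmax : ℝ)
    (hΔa : 0 < Δa) (hε : 0 < ε)
    (ζ : ℕ → ℕ → ℝ) (β : ℕ → ℝ)
    (hζmin : 0 < ζmin)
    (hζ : ∀ n i, ζmin ≤ ζ n i ∧ ζ n i ≤ ζmax)
    (hβmin : 0 < βmin)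
    (hβ : ∀ n, βmin ≤ β n ∧ β n ≤ βmax)
    (ρ : ℕ → ℕ → ℝ)
    (hsum : Summable (ρ 0))
    (hrec : ∀ n i, ρ (n+1) (i+1) = ρ n i / (1 + Δa * ζ (n+1) (i+1)))
    (hbdry : ∀ n, ρ (n+1) 0 =
      β (n+1) / (1 + Δa * (β (n+1) + ζ (n+1) 0)) * (1 - Δa * ∑' i, ρ (n+1) (i+1)))
    (s : ℕ → ℝ) (hs : ∀ n, s n = Δa * ∑' i, ρ n i)
    (hinit_pos : ∀ i, 0 ≤ ρ 0 i) (hinit_s : s 0 ≤ 1)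
    (μ : ℝ) (hμpos : 0 < μ)
    (hμlt : μ < min (s 0) (βmin / (βmin + ζmax))) :
    ∀ n, μ < s n := by
  have hζmax : 0 < ζmax := hζmin.trans_le ((hζ 0 0).1.trans (hζ 0 0).2)
  have hμ1 : μ * (βmin + ζmax) < βmin := by
    have := (lt_min_iff.mp hμlt).2
    have hd : (0:ℝ) < βmin + ζmax := by positivity
    rwa [lt_div_iff₀ hd] at this
  -- main invariant
  have main : ∀ n, Summable (ρ n) ∧ (∀ i, 0 ≤ ρ n i) ∧ s n ≤ 1 ∧ μ < s n := by
    intro n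
    induction n with
    | zero => exact ⟨hsum, hinit_pos, hinit_s, (lt_min_iff.mp hμlt).1⟩
    | succ n ih =>
      obtain ⟨hSum, hPos, hs1, hsμ⟩ := ih
      have hden : ∀ i, 0 < 1 + Δa * ζ (n+1) (i+1) := fun i => by
        nlinarith [(hζ (n+1) (i+1)).1, mul_pos hΔa hζmin]
      have hg_nonneg : ∀ i, 0 ≤ ρ (n+1) (i+1) := fun i => by
        rw [hrec n i]; exact div_nonneg (hPos i) (hden i).le
      have hg_le : ∀ i, ρ (n+1) (i+1) ≤ ρ n i := fun i => by
        rw [hrec n i]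
        exact div_le_self (hPos i) (by nlinarith [(hζ (n+1) (i+1)).1, mul_pos hΔa hζmin])
      have hgSum : Summable (fun i => ρ (n+1) (i+1)) :=
        Summable.of_nonneg_of_le hg_nonneg hg_le hSum
      have hρSum : Summable (ρ (n+1)) := (summable_nat_add_iff 1).mp hgSum
      have hT_le : ∑' i, ρ (n+1) (i+1) ≤ ∑' i, ρ n i := Summable.tsum_le_tsum hg_le hgSum hSum
      have hK : (0:ℝ) < 1 + Δa * ζmax := by positivity
      have hT_ge : (∑' i, ρ n i) / (1 + Δa * ζmax) ≤ ∑' i, ρ (n+1) (i+1) := by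
        rw [← tsum_div_const]
        refine Summable.tsum_le_tsum (fun i => ?_) (hSum.div_const _) hgSum
        rw [hrec n i]
        gcongr
        · exact hPos i
        · exact hden i
        · nlinarith [(hζ (n+1) (i+1)).2]
      have hT_nonneg : 0 ≤ ∑' i, ρ (n+1) (i+1) := tsum_nonneg hg_nonneg
      set A := Δa * ∑' i, ρ (n+1) (i+1) with hA_def
      have hA_nonneg : 0 ≤ A := by positivity
      have hA_le : A ≤ s n := by rw [hs n]; exact mul_le_mul_of_nonneg_left hT_le hΔa.le
      have hA1 : A ≤ 1 := hA_le.trans hs1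
      have hA_gt : μ < A * (1 + Δa * ζmax) := by
        have h1 : s n ≤ A * (1 + Δa * ζmax) := by
          rw [hs n, hA_def]
          have := mul_le_mul_of_nonneg_left hT_ge hΔa.le
          calc Δa * ∑' i, ρ n i
              = Δa * ((∑' i, ρ n i) / (1 + Δa * ζmax)) * (1 + Δa * ζmax) := by
                field_simp
            _ ≤ Δa * (∑' i, ρ (n+1) (i+1)) * (1 + Δa * ζmax) := by
                apply mul_le_mul_of_nonneg_right _ hK.le
                exact this
        exact hsμ.trans_le h1
      -- boundary term
      have hβn := hβ (n+1)
      have hζ0 := hζ (n+1) 0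
      have hdc : (0:ℝ) < 1 + Δa * (β (n+1) + ζ (n+1) 0) := by
        nlinarith [mul_pos hΔa (lt_of_lt_of_le hβmin hβn.1),
          mul_pos hΔa (lt_of_lt_of_le hζmin hζ0.1)]
      set c := Δa * β (n+1) / (1 + Δa * (β (n+1) + ζ (n+1) 0)) with hc_def
      have hc0 : 0 ≤ c := by
        exact div_nonneg (mul_nonneg hΔa.le (hβmin.le.trans hβn.1)) hdc.le
      have hc1 : c < 1 := by
        rw [hc_def, div_lt_one hdc]
        nlinarith [mul_pos hΔa (lt_of_lt_of_le hζmin hζ0.1)]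
      have hc2 : Δa * βmin ≤ c * (1 + Δa * (βmin + ζmax)) := by
        rw [hc_def, div_mul_eq_mul_div, le_div_iff₀ hdc]
        nlinarith [mul_le_mul hβn.1 hζ0.2 (hζmin.le.trans hζ0.1) (hβmin.le.trans hβn.1),
          mul_pos hΔa hΔa, mul_nonneg hΔa.le (sub_nonneg.2 hβn.1), hβn.1]
      have hρ0 : Δa * ρ (n+1) 0 = c * (1 - A) := by
        rw [hbdry n, hc_def, hA_def]; ring
      have hρ0_nonneg : 0 ≤ ρ (n+1) 0 := by
        have h1A : 0 ≤ 1 - A := by linarith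
        rw [hbdry n]
        apply mul_nonneg _ (by rw [hA_def] at h1A; exact h1A)
        exact div_nonneg (hβmin.le.trans hβn.1) hdc.le
      have hPos' : ∀ i, 0 ≤ ρ (n+1) i := by
        intro i; cases i with
        | zero => exact hρ0_nonneg
        | succ i => exact hg_nonneg i
      have hs_eq : s (n+1) = A * (1 - c) + c := by
        rw [hs (n+1), Summable.tsum_eq_zero_add hρSum, mul_add, hρ0, hA_def]; ring
      refine ⟨hρSum, hPos', ?_, ?_⟩
      · rw [hs_eq]; nlinarith
      · rw [hs_eq]
        exact stmt1_key Δa ζmax βmin μ A c hΔa hζmax hβmin hμpos hμ1 hA_gt hc1 hc2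
  exact fun n => (main n).2.2.2
end

section
/- Suppose the initial data satisfies ρ⁰ᵢ ≥ 0 for every i ∈ ℕ. Then the discrete mass-balance identity holds for every n ≥ 0: s^{n+1} + Δa²·Σ_{i∈ℕ} ζ^{n+1}ᵢ·ρ^{n+1}ᵢ = sⁿ + Δa·β^{n+1}·(1 − s^{n+1}). -/
/-!
Each interior cell of the upwind step satisfies
`ρ^{n+1}_{i+1} + Δa ζ^{n+1}_{i+1} ρ^{n+1}_{i+1} = ρⁿ_i`, and clearing the denominator of the
boundary cell gives `ρ^{n+1}_0 + Δa ζ^{n+1}_0 ρ^{n+1}_0 = β^{n+1} (1 - s^{n+1})`. Summing all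
cells, multiplied by `Δa`, yields the mass balance. The series converge because the scheme only
divides by numbers `≥ 1`, so `|ρ^{n+1}_{i+1}| ≤ |ρⁿ_i|`, and `ζ ρ` is then summable as a
difference of summable sequences.
-/

section UpwindStep

variable {h b : ℝ} {z u v : ℕ → ℝ}

lemma summable_of_upwind (hh : 0 ≤ h) (hz : ∀ i, 0 ≤ z (i + 1)) (hu : Summable u)
    (hv : ∀ i, v (i + 1) = u i / (1 + h * z (i + 1))) : Summable v := by
  refine (summable_nat_add_iff 1).1 (hu.norm.of_norm_bounded fun i => ?_)
  rw [hv, norm_div]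
  exact div_le_self (norm_nonneg _) <|
    (le_add_of_nonneg_right (mul_nonneg hh (hz i))).trans (Real.le_norm_self _)

lemma upwind_interior_balance {i : ℕ} (hden : 1 + h * z (i + 1) ≠ 0)
    (hv : v (i + 1) = u i / (1 + h * z (i + 1))) :
    v (i + 1) + h * (z (i + 1) * v (i + 1)) = u i := by
  rw [hv]
  field_simp

lemma upwind_boundary_balance {T : ℝ} (hden : 1 + h * (b + z 0) ≠ 0)
    (hv : v 0 = b / (1 + h * (b + z 0)) * (1 - h * T)) :
    v 0 + h * (z 0 * v 0) = b * (1 - h * (v 0 + T)) := by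
  rw [hv]
  field_simp
  ring

end UpwindStep

lemma hasSum_of_add_mul_eq {a c u : ℕ → ℝ} {A U h : ℝ} (hh : h ≠ 0) (ha : HasSum a A)
    (hu : HasSum u U) (hrel : ∀ i, a i + h * c i = u i) : HasSum c ((U - A) / h) := by
  have hc : c = fun i => (u i - a i) / h := funext fun i => by
    rw [← hrel]
    field_simp
    ring
  exact hc ▸ (hu.sub ha).div_const h

theorem stmt2_general
    (Δa ζmin ζmax βmin βmax : ℝ)
    (hΔa : 0 < Δa)
    (ζ : ℕ → ℕ → ℝ) (β : ℕ → ℝ)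
    (hζmin : 0 < ζmin)
    (hζ : ∀ n i, ζmin ≤ ζ n i ∧ ζ n i ≤ ζmax)
    (hβmin : 0 < βmin)
    (hβ : ∀ n, βmin ≤ β n ∧ β n ≤ βmax)
    (ρ : ℕ → ℕ → ℝ)
    (hsum : Summable (ρ 0))
    (hrec : ∀ n i, ρ (n+1) (i+1) = ρ n i / (1 + Δa * ζ (n+1) (i+1)))
    (hbdry : ∀ n, ρ (n+1) 0 =
      β (n+1) / (1 + Δa * (β (n+1) + ζ (n+1) 0)) * (1 - Δa * ∑' i, ρ (n+1) (i+1)))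
    (s : ℕ → ℝ) (hs : ∀ n, s n = Δa * ∑' i, ρ n i) :
    ∀ n, s (n+1) + Δa ^ 2 * ∑' i, ζ (n+1) i * ρ (n+1) i
      = s n + Δa * β (n+1) * (1 - s (n+1)) := by
  have hζpos : ∀ n i, 0 < ζ n i := fun n i => hζmin.trans_le (hζ n i).1
  have hρ : ∀ n, Summable (ρ n) := fun n => Nat.rec hsum
    (fun n ih => summable_of_upwind hΔa.le (fun i => (hζpos _ _).le) ih (hrec n)) n
  intro n
  have hinterior := hasSum_of_add_mul_eq hΔa.ne' ((summable_nat_add_iff 1).2 (hρ (n+1))).hasSum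
    (hρ n).hasSum fun i =>
      upwind_interior_balance (add_pos one_pos (mul_pos hΔa (hζpos _ _))).ne' (hrec n i)
  have hβpos : 0 < β (n+1) := hβmin.trans_le (hβ _).1
  have hboundary := upwind_boundary_balance
    (add_pos one_pos (mul_pos hΔa (add_pos hβpos (hζpos _ _)))).ne' (hbdry n)
  have hmass : ∑' i, ρ (n+1) i = ρ (n+1) 0 + ∑' i, ρ (n+1) (i+1) :=
    (hρ (n+1)).tsum_eq_zero_add
  have hloss : ∑' i, ζ (n+1) i * ρ (n+1) i = ζ (n+1) 0 * ρ (n+1) 0 + _ :=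
    ((summable_nat_add_iff 1).1 hinterior.summable).tsum_eq_zero_add.trans
      (congrArg _ hinterior.tsum_eq)
  rw [hs, hs, hloss, hmass]
  field_simp
  linear_combination hboundary

/-- Discrete mass-balance identity (equation `eq.s` of the paper):
for every `n ≥ 0`,
`s^{n+1} + Δa² Σᵢ ζ^{n+1}ᵢ ρ^{n+1}ᵢ = sⁿ + Δa β^{n+1} (1 − s^{n+1})`. -/
theorem stmt2
    (Δa ε ζmin ζmax βmin βmax : ℝ)
    (hΔa : 0 < Δa) (hε : 0 < ε)
    (ζ : ℕ → ℕ → ℝ) (β : ℕ → ℝ)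
    (hζmin : 0 < ζmin)
    (hζ : ∀ n i, ζmin ≤ ζ n i ∧ ζ n i ≤ ζmax)
    (hβmin : 0 < βmin)
    (hβ : ∀ n, βmin ≤ β n ∧ β n ≤ βmax)
    (ρ : ℕ → ℕ → ℝ)
    (hsum : Summable (ρ 0))
    (hrec : ∀ n i, ρ (n+1) (i+1) = ρ n i / (1 + Δa * ζ (n+1) (i+1)))
    (hbdry : ∀ n, ρ (n+1) 0 =
      β (n+1) / (1 + Δa * (β (n+1) + ζ (n+1) 0)) * (1 - Δa * ∑' i, ρ (n+1) (i+1)))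
    (s : ℕ → ℝ) (hs : ∀ n, s n = Δa * ∑' i, ρ n i)
    (hinit_pos : ∀ i, 0 ≤ ρ 0 i) :
    ∀ n, s (n+1) + Δa ^ 2 * ∑' i, ζ (n+1) i * ρ (n+1) i
      = s n + Δa * β (n+1) * (1 - s (n+1)) :=
  stmt2_general Δa ζmin ζmax βmin βmax hΔa ζ β hζmin hζ hβmin hβ ρ hsum hrec hbdry s hs
end

section
/- Let f ∈ U_T. Then for every Δa > 0 and every Δt with 0 < Δt < T, ∫₀^{T−Δt} ∫₀^∞ ‖ f(a+Δa, t+Δt) − ∫₀¹ f(a+τ·Δa, t+τ·Δt) dτ ‖_{L^∞(Ω)} da dt ≤ (Δa + Δt)·‖f‖_{U_T}, where the inner integral in τ is a Bochner integral in L^∞(Ω). -/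
open MeasureTheory Filter ENNReal

/-- Lebesgue measure on `Ω = (0,1)`. -/
noncomputable def Om : Measure ℝ := volume.restrict (Set.Ioo 0 1)

/-- The Banach space `L^∞(Ω)`. -/
noncomputable abbrev Linf := Lp ℝ ⊤ Om

/-- The Banach space `L¹(Ω)`. -/
noncomputable abbrev Lone := Lp ℝ 1 Om

/-- The duality pairing `⟨u,v⟩ = ∫_Ω u v dx` between `L^∞(Ω)` and `L¹(Ω)`. -/
noncomputable def pair (u : Linf) (v : Lone) : ℝ := ∫ x, (u : ℝ → ℝ) x * (v : ℝ → ℝ) x ∂Om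

/-- The `Y_T` norm `∫₀^T ∫₀^∞ ‖f(a,t)‖_{L^∞(Ω)} da dt` (as extended real). -/
noncomputable def YT (T : ℝ) (f : ℝ → ℝ → Linf) : ℝ≥0∞ :=
  ∫⁻ t in Set.Ioo (0:ℝ) T, ∫⁻ a in Set.Ioi (0:ℝ), (‖f a t‖₊ : ℝ≥0∞)

/-- Difference quotient in age: `D^σ_a f(a,t) = (f(a+σ,t) − f(a,t))/σ`. -/
noncomputable def Da (σ : ℝ) (f : ℝ → ℝ → Linf) : ℝ → ℝ → Linf :=
  fun a t => σ⁻¹ • (f (a + σ) t - f a t)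

/-- Difference quotient in time: `D^σ_t f(a,t) = (f(a,t+σ) − f(a,t))/σ`. -/
noncomputable def Dt (σ : ℝ) (f : ℝ → ℝ → Linf) : ℝ → ℝ → Linf :=
  fun a t => σ⁻¹ • (f a (t + σ) - f a t)

/-- The `U_T = BV(ℝ₊×(0,T); L^∞(Ω))` norm
`‖f‖_{U_T} = ‖f‖_{Y_T} + limsup_{σ→0⁺} (‖D^σ_a f‖_{Y_T} + ‖D^σ_t f‖_{Y_{T−σ}})`. -/
noncomputable def UTnorm (T : ℝ) (f : ℝ → ℝ → Linf) : ℝ≥0∞ :=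
  YT T f + Filter.limsup (fun σ => YT T (Da σ f) + YT (T - σ) (Dt σ f))
    (nhdsWithin 0 (Set.Ioi 0))

/-!
Since `∫₀¹ dτ = 1`, the error at `(a, t)` is the `τ`-average of
`f(a+Δa, t+Δt) - f(a+τΔa, t+τΔt)`, so by Jensen and Tonelli it suffices to bound the `Y`-norm
of each of these differences by `(Δa + Δt) L`, for any `L` that eventually bounds
`‖D^σ_a f‖_{Y_T} + ‖D^σ_t f‖_{Y_{T-σ}}` as `σ → 0⁺`. Split such a difference into a step in age
and a step in time. A step of length `h` telescopes into `n` steps of length `σ = h / n`, each of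
which is `σ` times a difference quotient; since translating into `(0,∞) × (0,T)` only shrinks the
domain of integration, each has `Y`-norm at most `σ L` once `n` is large.
-/

open Set Topology Measure

section Translation

variable {G : Type*} [MeasurableSpace G] [AddGroup G] [MeasurableAdd G] {μ : Measure G}
  [μ.IsAddRightInvariant] {s t : Set G} {v : G}

theorem map_add_right_restrict_le (h : MapsTo (· + v) s t) :
    (μ.restrict s).map (· + v) ≤ μ.restrict t :=
  calc (μ.restrict s).map (· + v) ≤ (μ.restrict ((· + v) ⁻¹' t)).map (· + v) :=
        Measure.map_mono (Measure.restrict_mono h.subset_preimage le_rfl) (measurable_add_const v)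
    _ = μ.restrict t := by
        rw [← (measurableEmbedding_addRight v).restrict_map, map_add_right_eq_self]

theorem quasiMeasurePreserving_add_right_restrict (h : MapsTo (· + v) s t) :
    QuasiMeasurePreserving (· + v) (μ.restrict s) (μ.restrict t) :=
  ⟨measurable_add_const v, (map_add_right_restrict_le h).absolutelyContinuous⟩

theorem setLIntegral_comp_add_right_le (g : G → ℝ≥0∞) (h : MapsTo (· + v) s t) :
    ∫⁻ x in s, g (x + v) ∂μ ≤ ∫⁻ x in t, g x ∂μ := by
  rw [← (measurableEmbedding_addRight v).lintegral_map]
  exact lintegral_mono' (map_add_right_restrict_le h) le_rfl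

end Translation

theorem enorm_sub_integral_le_lintegral_enorm_sub {α E : Type*} [MeasurableSpace α]
    [NormedAddCommGroup E] [NormedSpace ℝ E] [CompleteSpace E] {μ : Measure α}
    [IsProbabilityMeasure μ] {g : α → E}
    (hg : AEStronglyMeasurable g μ) (x : E) :
    ‖x - ∫ a, g a ∂μ‖ₑ ≤ ∫⁻ a, ‖x - g a‖ₑ ∂μ := by
  by_cases hint : Integrable g μ
  · have hx : x - ∫ a, g a ∂μ = ∫ a, (x - g a) ∂μ := by
      rw [integral_sub (integrable_const x) hint, integral_const, probReal_univ, one_smul]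
    rw [hx]
    exact enorm_integral_le_lintegral_enorm _
  · -- then `∫ g = 0`, but `∫⁻ ‖g‖ = ∞` forces `∫⁻ ‖x - g‖ = ∞` as well
    have hinf : ∫⁻ a, ‖g a‖ₑ ∂μ = ∞ := by
      by_contra h
      exact hint ⟨hg, lt_top_iff_ne_top.2 h⟩
    have hle : ∫⁻ a, ‖g a‖ₑ ∂μ ≤ ‖x‖ₑ + ∫⁻ a, ‖x - g a‖ₑ ∂μ := calc
      ∫⁻ a, ‖g a‖ₑ ∂μ ≤ ∫⁻ a, (‖x‖ₑ + ‖x - g a‖ₑ) ∂μ :=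
        lintegral_mono fun a => by simpa using enorm_sub_le (a := x) (b := x - g a)
      _ = ‖x‖ₑ + ∫⁻ a, ‖x - g a‖ₑ ∂μ := by
        rw [lintegral_add_left measurable_const, lintegral_const, measure_univ, mul_one]
    rw [hinf, top_le_iff, add_eq_top] at hle
    simp [hle.resolve_left enorm_ne_top]

theorem lintegral_enorm_sub_triangle {α E : Type*} [MeasurableSpace α] [NormedAddCommGroup E]
    {μ : Measure α} {f g h : α → E} (hf : AEStronglyMeasurable f μ)
    (hg : AEStronglyMeasurable g μ) :
    ∫⁻ a, ‖h a - f a‖ₑ ∂μ ≤ ∫⁻ a, ‖g a - f a‖ₑ ∂μ + ∫⁻ a, ‖h a - g a‖ₑ ∂μ :=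
  calc ∫⁻ a, ‖h a - f a‖ₑ ∂μ ≤ ∫⁻ a, (‖g a - f a‖ₑ + ‖h a - g a‖ₑ) ∂μ :=
        lintegral_mono fun a => by simpa using enorm_add_le (g a - f a) (h a - g a)
    _ = ∫⁻ a, ‖g a - f a‖ₑ ∂μ + ∫⁻ a, ‖h a - g a‖ₑ ∂μ := lintegral_add_left' (hg.sub hf).enorm _

theorem lintegral_enorm_sub_le_of_forall_increments {α E : Type*} [MeasurableSpace α]
    [NormedAddCommGroup E] {μ : Measure α} {u : ℝ → α → E} {a b : ℝ} {L : ℝ≥0∞} (hab : a ≤ b)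
    (hu : ∀ x ∈ Icc a b, AEStronglyMeasurable (u x) μ)
    (hstep : ∀ᶠ σ in 𝓝[>] 0, ∀ x, a ≤ x → x + σ ≤ b →
      ∫⁻ p, ‖u (x + σ) p - u x p‖ₑ ∂μ ≤ ENNReal.ofReal σ * L) :
    ∫⁻ p, ‖u b p - u a p‖ₑ ∂μ ≤ ENNReal.ofReal (b - a) * L := by
  rcases hab.eq_or_lt with rfl | hlt
  · simp
  have hmesh : Tendsto (fun n : ℕ => (b - a) / n) atTop (𝓝[>] 0) :=
    tendsto_nhdsWithin_iff.2 ⟨tendsto_const_div_atTop_nhds_zero_nat _,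
      (eventually_gt_atTop 0).mono fun n hn => div_pos (sub_pos.2 hlt) (by exact_mod_cast hn)⟩
  obtain ⟨n, hn, hstep⟩ := ((eventually_gt_atTop 0).and (hmesh.eventually hstep)).exists
  set σ := (b - a) / n
  have hσ : 0 ≤ σ := div_nonneg (sub_nonneg.2 hab) n.cast_nonneg
  have hnσ : n * σ = b - a := mul_div_cancel₀ _ (by positivity)
  have hgrid : ∀ k ≤ n, a + k * σ ∈ Icc a b := fun k hk =>
    ⟨by nlinarith, by nlinarith [(Nat.cast_le (α := ℝ)).2 hk]⟩
  have hwalk : ∀ k ≤ n, ∫⁻ p, ‖u (a + k * σ) p - u a p‖ₑ ∂μ ≤ ENNReal.ofReal (k * σ) * L := by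
    intro k
    induction k with
    | zero => simp
    | succ k ih =>
      intro hk
      have hk' : a + (k + 1 : ℕ) * σ = a + k * σ + σ := by push_cast; ring
      calc ∫⁻ p, ‖u (a + (k + 1 : ℕ) * σ) p - u a p‖ₑ ∂μ
          ≤ ∫⁻ p, ‖u (a + k * σ) p - u a p‖ₑ ∂μ
            + ∫⁻ p, ‖u (a + k * σ + σ) p - u (a + k * σ) p‖ₑ ∂μ := by
            rw [hk']
            exact lintegral_enorm_sub_triangle (hu a ⟨le_rfl, hab⟩)
              (hu _ (hgrid k (by omega)))
        _ ≤ ENNReal.ofReal (k * σ) * L + ENNReal.ofReal σ * L := by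
            refine add_le_add (ih (by omega)) (hstep _ (hgrid k (by omega)).1 ?_)
            nlinarith [(Nat.cast_le (α := ℝ)).2 hk]
        _ = ENNReal.ofReal ((k + 1 : ℕ) * σ) * L := by
            rw [← add_mul, ← ENNReal.ofReal_add (by positivity) hσ]
            push_cast; ring_nf
  simpa [hnσ] using hwalk n le_rfl

def halfStrip (T : ℝ) : Set (ℝ × ℝ) := Ioi 0 ×ˢ Ioo 0 T

theorem volume_restrict_halfStrip (T : ℝ) :
    volume.restrict (halfStrip T) =
      (volume.restrict (Ioi (0:ℝ))).prod (volume.restrict (Ioo 0 T)) := by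
  rw [halfStrip, Measure.volume_eq_prod, Measure.prod_restrict]

theorem mapsTo_add_halfStrip {T' T c d : ℝ} (hc : 0 ≤ c) (hd : 0 ≤ d) (hT : T' + d ≤ T) :
    MapsTo (· + (c, d)) (halfStrip T') (halfStrip T) := by
  rintro p ⟨ha, ht0, htT⟩
  exact ⟨add_pos_of_pos_of_nonneg ha hc, add_pos_of_pos_of_nonneg ht0 hd,
    show p.2 + d < T by linarith⟩

theorem MeasureTheory.AEStronglyMeasurable.comp_add_halfStrip {E : Type*} [TopologicalSpace E]
    {T' T c d : ℝ} {f : ℝ → ℝ → E}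
    (hf : AEStronglyMeasurable (fun p : ℝ × ℝ => f p.1 p.2) (volume.restrict (halfStrip T)))
    (hc : 0 ≤ c) (hd : 0 ≤ d) (hT : T' + d ≤ T) :
    AEStronglyMeasurable (fun p : ℝ × ℝ => f (p.1 + c) (p.2 + d))
      (volume.restrict (halfStrip T')) :=
  hf.comp_quasiMeasurePreserving
    (quasiMeasurePreserving_add_right_restrict (mapsTo_add_halfStrip hc hd hT))

theorem lintegral_lintegral_eq_setLIntegral_halfStrip {T : ℝ} (g : ℝ × ℝ → ℝ≥0∞)
    (hg : AEMeasurable g (volume.restrict (halfStrip T))) :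
    ∫⁻ t in Ioo (0:ℝ) T, ∫⁻ a in Ioi (0:ℝ), g (a, t) = ∫⁻ p in halfStrip T, g p := by
  rw [volume_restrict_halfStrip] at hg ⊢
  exact (lintegral_prod_symm g hg).symm

theorem setLIntegral_halfStrip_le_YT (T : ℝ) (g : ℝ → ℝ → Linf) :
    ∫⁻ p in halfStrip T, ‖g p.1 p.2‖ₑ ≤ YT T g := by
  rw [volume_restrict_halfStrip, ← lintegral_prod_swap, YT]
  simp only [enorm_eq_nnnorm]
  exact lintegral_prod_le _

theorem setLIntegral_halfStrip_add_le_YT {T' T c d : ℝ} (g : ℝ → ℝ → Linf) (hc : 0 ≤ c)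
    (hd : 0 ≤ d) (hT : T' + d ≤ T) :
    ∫⁻ p in halfStrip T', ‖g (p.1 + c) (p.2 + d)‖ₑ ≤ YT T g :=
  (setLIntegral_comp_add_right_le (μ := volume) (fun p : ℝ × ℝ => ‖g p.1 p.2‖ₑ)
    (mapsTo_add_halfStrip hc hd hT)).trans (setLIntegral_halfStrip_le_YT T g)

theorem smul_Da {σ : ℝ} (hσ : σ ≠ 0) (f : ℝ → ℝ → Linf) (a t : ℝ) :
    σ • Da σ f a t = f (a + σ) t - f a t :=
  smul_inv_smul₀ hσ _

theorem smul_Dt {σ : ℝ} (hσ : σ ≠ 0) (f : ℝ → ℝ → Linf) (a t : ℝ) :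
    σ • Dt σ f a t = f a (t + σ) - f a t :=
  smul_inv_smul₀ hσ _

section Steps

variable {T T' : ℝ} {L : ℝ≥0∞} {f : ℝ → ℝ → Linf}

theorem lintegral_enorm_sub_shift_fst_le
    (hf : AEStronglyMeasurable (fun p : ℝ × ℝ => f p.1 p.2) (volume.restrict (halfStrip T)))
    (hL : ∀ᶠ σ in 𝓝[>] 0, YT T (Da σ f) ≤ L) {x y d : ℝ} (hx : 0 ≤ x) (hxy : x ≤ y) (hd : 0 ≤ d)
    (hT : T' + d ≤ T) :
    ∫⁻ p in halfStrip T', ‖f (p.1 + y) (p.2 + d) - f (p.1 + x) (p.2 + d)‖ₑ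
      ≤ ENNReal.ofReal (y - x) * L := by
  refine lintegral_enorm_sub_le_of_forall_increments (μ := volume.restrict (halfStrip T'))
    (u := fun z p => f (p.1 + z) (p.2 + d)) hxy
    (fun z hz => hf.comp_add_halfStrip (hx.trans hz.1) hd hT) ?_
  filter_upwards [hL, self_mem_nhdsWithin] with σ hσL (hσ : 0 < σ) z hz _
  calc ∫⁻ p in halfStrip T', ‖f (p.1 + (z + σ)) (p.2 + d) - f (p.1 + z) (p.2 + d)‖ₑ
      = ∫⁻ p in halfStrip T', ENNReal.ofReal σ * ‖Da σ f (p.1 + z) (p.2 + d)‖ₑ := by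
        refine lintegral_congr fun p => ?_
        rw [← add_assoc, ← smul_Da hσ.ne', enorm_smul, Real.enorm_eq_ofReal hσ.le]
    _ = ENNReal.ofReal σ * ∫⁻ p in halfStrip T', ‖Da σ f (p.1 + z) (p.2 + d)‖ₑ :=
        lintegral_const_mul' _ _ ofReal_ne_top
    _ ≤ ENNReal.ofReal σ * L := by
        gcongr
        exact (setLIntegral_halfStrip_add_le_YT _ (hx.trans hz) hd hT).trans hσL

theorem lintegral_enorm_sub_shift_snd_le
    (hf : AEStronglyMeasurable (fun p : ℝ × ℝ => f p.1 p.2) (volume.restrict (halfStrip T)))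
    (hL : ∀ᶠ σ in 𝓝[>] 0, YT (T - σ) (Dt σ f) ≤ L) {c x y : ℝ} (hc : 0 ≤ c) (hx : 0 ≤ x)
    (hxy : x ≤ y) (hT : T' + y ≤ T) :
    ∫⁻ p in halfStrip T', ‖f (p.1 + c) (p.2 + y) - f (p.1 + c) (p.2 + x)‖ₑ
      ≤ ENNReal.ofReal (y - x) * L := by
  refine lintegral_enorm_sub_le_of_forall_increments (μ := volume.restrict (halfStrip T'))
    (u := fun z p => f (p.1 + c) (p.2 + z)) hxy
    (fun z hz => hf.comp_add_halfStrip hc (hx.trans hz.1) (by linarith [hz.2])) ?_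
  filter_upwards [hL, self_mem_nhdsWithin] with σ hσL (hσ : 0 < σ) z hz _
  calc ∫⁻ p in halfStrip T', ‖f (p.1 + c) (p.2 + (z + σ)) - f (p.1 + c) (p.2 + z)‖ₑ
      = ∫⁻ p in halfStrip T', ENNReal.ofReal σ * ‖Dt σ f (p.1 + c) (p.2 + z)‖ₑ := by
        refine lintegral_congr fun p => ?_
        rw [← add_assoc, ← smul_Dt hσ.ne', enorm_smul, Real.enorm_eq_ofReal hσ.le]
    _ = ENNReal.ofReal σ * ∫⁻ p in halfStrip T', ‖Dt σ f (p.1 + c) (p.2 + z)‖ₑ :=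
        lintegral_const_mul' _ _ ofReal_ne_top
    _ ≤ ENNReal.ofReal σ * L := by
        gcongr
        exact (setLIntegral_halfStrip_add_le_YT _ hc (hx.trans hz) (by linarith)).trans hσL

theorem lintegral_enorm_sub_segment_le
    (hf : AEStronglyMeasurable (fun p : ℝ × ℝ => f p.1 p.2) (volume.restrict (halfStrip T)))
    (hL : ∀ᶠ σ in 𝓝[>] 0, YT T (Da σ f) + YT (T - σ) (Dt σ f) ≤ L) {Δa Δt τ : ℝ}
    (hΔa : 0 ≤ Δa) (hΔt : 0 ≤ Δt) (hτ : τ ∈ Icc (0:ℝ) 1) :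
    ∫⁻ p in halfStrip (T - Δt), ‖f (p.1 + Δa) (p.2 + Δt) - f (p.1 + τ * Δa) (p.2 + τ * Δt)‖ₑ
      ≤ ENNReal.ofReal (Δa + Δt) * L := by
  have hτa : τ * Δa ≤ Δa := mul_le_of_le_one_left hΔa hτ.2
  have hτt : τ * Δt ≤ Δt := mul_le_of_le_one_left hΔt hτ.2
  have hτa₀ : 0 ≤ τ * Δa := mul_nonneg hτ.1 hΔa
  have hτt₀ : 0 ≤ τ * Δt := mul_nonneg hτ.1 hΔt
  calc ∫⁻ p in halfStrip (T - Δt), ‖f (p.1 + Δa) (p.2 + Δt) - f (p.1 + τ * Δa) (p.2 + τ * Δt)‖ₑ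
      ≤ (∫⁻ p in halfStrip (T - Δt),
          ‖f (p.1 + Δa) (p.2 + τ * Δt) - f (p.1 + τ * Δa) (p.2 + τ * Δt)‖ₑ)
        + ∫⁻ p in halfStrip (T - Δt), ‖f (p.1 + Δa) (p.2 + Δt) - f (p.1 + Δa) (p.2 + τ * Δt)‖ₑ :=
        lintegral_enorm_sub_triangle
          (hf.comp_add_halfStrip (T' := T - Δt) hτa₀ hτt₀ (by linarith))
          (hf.comp_add_halfStrip (T' := T - Δt) hΔa hτt₀ (by linarith))
    _ ≤ ENNReal.ofReal (Δa - τ * Δa) * L + ENNReal.ofReal (Δt - τ * Δt) * L :=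
        add_le_add
          (lintegral_enorm_sub_shift_fst_le (T' := T - Δt) hf
            (hL.mono fun _ h => le_self_add.trans h) hτa₀ hτa hτt₀ (by linarith))
          (lintegral_enorm_sub_shift_snd_le (T' := T - Δt) hf
            (hL.mono fun _ h => le_add_self.trans h) hΔa hτt₀ hτt (by linarith))
    _ ≤ ENNReal.ofReal (Δa + Δt) * L := by
        rw [← add_mul, ← ENNReal.ofReal_add (by linarith) (by linarith)]
        gcongr <;> linarith

theorem MeasureTheory.AEStronglyMeasurable.comp_add_segment
    (hf : AEStronglyMeasurable (fun p : ℝ × ℝ => f p.1 p.2) (volume.restrict (halfStrip T)))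
    {Δa Δt : ℝ} (hΔa : 0 ≤ Δa) (hΔt : 0 ≤ Δt) :
    AEStronglyMeasurable (fun q : (ℝ × ℝ) × ℝ => f (q.1.1 + q.2 * Δa) (q.1.2 + q.2 * Δt))
      ((volume.restrict (halfStrip (T - Δt))).prod (volume.restrict (Ioc 0 1))) :=
  hf.comp_quasiMeasurePreserving <| QuasiMeasurePreserving.prod_of_left
    (f := fun q : (ℝ × ℝ) × ℝ => q.1 + (q.2 * Δa, q.2 * Δt)) (by fun_prop) <|
      (ae_restrict_mem measurableSet_Ioc).mono fun τ hτ =>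
        quasiMeasurePreserving_add_right_restrict <|
          mapsTo_add_halfStrip (mul_nonneg hτ.1.le hΔa) (mul_nonneg hτ.1.le hΔt)
            (by nlinarith [hτ.2])

theorem setLIntegral_enorm_sub_average_segment_le
    (hf : AEStronglyMeasurable (fun p : ℝ × ℝ => f p.1 p.2) (volume.restrict (halfStrip T)))
    (hL : ∀ᶠ σ in 𝓝[>] 0, YT T (Da σ f) + YT (T - σ) (Dt σ f) ≤ L) {Δa Δt : ℝ}
    (hΔa : 0 ≤ Δa) (hΔt : 0 ≤ Δt) :
    ∫⁻ p in halfStrip (T - Δt),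
        ‖f (p.1 + Δa) (p.2 + Δt) - ∫ τ in Ioc (0:ℝ) 1, f (p.1 + τ * Δa) (p.2 + τ * Δt)‖ₑ
      ≤ ENNReal.ofReal (Δa + Δt) * L := by
  have : IsProbabilityMeasure (volume.restrict (Ioc (0:ℝ) 1)) := ⟨by simp⟩
  have hG := hf.comp_add_segment hΔa hΔt
  have hX : AEStronglyMeasurable (fun p : ℝ × ℝ => f (p.1 + Δa) (p.2 + Δt))
      (volume.restrict (halfStrip (T - Δt))) :=
    hf.comp_add_halfStrip hΔa hΔt (by linarith)
  calc ∫⁻ p in halfStrip (T - Δt),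
        ‖f (p.1 + Δa) (p.2 + Δt) - ∫ τ in Ioc (0:ℝ) 1, f (p.1 + τ * Δa) (p.2 + τ * Δt)‖ₑ
      ≤ ∫⁻ p in halfStrip (T - Δt), ∫⁻ τ in Ioc (0:ℝ) 1,
          ‖f (p.1 + Δa) (p.2 + Δt) - f (p.1 + τ * Δa) (p.2 + τ * Δt)‖ₑ :=
        lintegral_mono_ae <| hG.prodMk_left.mono fun p hp =>
          enorm_sub_integral_le_lintegral_enorm_sub hp _
    _ = ∫⁻ τ in Ioc (0:ℝ) 1, ∫⁻ p in halfStrip (T - Δt),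
          ‖f (p.1 + Δa) (p.2 + Δt) - f (p.1 + τ * Δa) (p.2 + τ * Δt)‖ₑ :=
        lintegral_lintegral_swap
          ((hX.comp_quasiMeasurePreserving quasiMeasurePreserving_fst).sub hG).enorm
    _ ≤ ∫⁻ _ in Ioc (0:ℝ) 1, ENNReal.ofReal (Δa + Δt) * L :=
        setLIntegral_mono' measurableSet_Ioc fun τ hτ =>
          lintegral_enorm_sub_segment_le hf hL hΔa hΔt (Ioc_subset_Icc_self hτ)
    _ = ENNReal.ofReal (Δa + Δt) * L := by simp

end Steps

theorem ENNReal.le_mul_limsup_of_forall_eventually_le {β : Type*} {l : Filter β} {u : β → ℝ≥0∞}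
    {x c : ℝ≥0∞} (hc₀ : c ≠ 0) (hc : c ≠ ∞) (h : ∀ L, (∀ᶠ σ in l, u σ ≤ L) → x ≤ c * L) :
    x ≤ c * limsup u l := by
  rw [mul_comm, ← ENNReal.div_le_iff_le_mul (.inl hc₀) (.inl hc)]
  refine le_limsup_of_le (by isBoundedDefault) fun L hL => ?_
  rw [ENNReal.div_le_iff_le_mul (.inl hc₀) (.inl hc), mul_comm]
  exact h L hL

theorem stmt6_general
    (T : ℝ) (f : ℝ → ℝ → Linf)
    (hfmeas : AEStronglyMeasurable (fun p : ℝ × ℝ => f p.1 p.2)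
      ((volume.restrict (Set.Ioi (0:ℝ))).prod (volume.restrict (Set.Ioo (0:ℝ) T))))
    (Δa Δt : ℝ) (hΔa : 0 < Δa) (hΔt : 0 < Δt) :
    (∫⁻ t in Set.Ioo (0:ℝ) (T - Δt), ∫⁻ a in Set.Ioi (0:ℝ),
        (‖f (a + Δa) (t + Δt) - ∫ τ in (0:ℝ)..1, f (a + τ * Δa) (t + τ * Δt)‖₊ : ℝ≥0∞))
      ≤ ENNReal.ofReal (Δa + Δt) * UTnorm T f := by
  have hf : AEStronglyMeasurable (fun p : ℝ × ℝ => f p.1 p.2) (volume.restrict (halfStrip T)) := by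
    rwa [volume_restrict_halfStrip]
  have hmeas := ((hf.comp_add_halfStrip hΔa.le hΔt.le (sub_add_cancel T Δt).le).sub
    (hf.comp_add_segment hΔa.le hΔt.le).integral_prod_right').enorm
  simp only [← enorm_eq_nnnorm, intervalIntegral.integral_of_le zero_le_one]
  calc _ = ∫⁻ p in halfStrip (T - Δt),
        ‖f (p.1 + Δa) (p.2 + Δt) - ∫ τ in Ioc (0:ℝ) 1, f (p.1 + τ * Δa) (p.2 + τ * Δt)‖ₑ :=
        lintegral_lintegral_eq_setLIntegral_halfStrip _ hmeas
    _ ≤ ENNReal.ofReal (Δa + Δt) *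
        limsup (fun σ => YT T (Da σ f) + YT (T - σ) (Dt σ f)) (𝓝[>] 0) :=
        ENNReal.le_mul_limsup_of_forall_eventually_le (ENNReal.ofReal_pos.2 (by linarith)).ne'
          ofReal_ne_top fun L hL => setLIntegral_enorm_sub_average_segment_le hf hL hΔa.le hΔt.le
    _ ≤ ENNReal.ofReal (Δa + Δt) * UTnorm T f := by
        gcongr
        exact le_add_self

/-- (Lemma `lem.err.bv`.) For `f ∈ U_T` and steps `Δa > 0`,
`0 < Δt < T`,
`∫₀^{T−Δt} ∫₀^∞ ‖f(a+Δa,t+Δt) − ∫₀¹ f(a+τΔa,t+τΔt) dτ‖_{L^∞(Ω)} da dt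
  ≤ (Δa+Δt)·‖f‖_{U_T}`. -/
theorem stmt6
    (T : ℝ) (hT : 0 < T) (f : ℝ → ℝ → Linf)
    (hfmeas : AEStronglyMeasurable (fun p : ℝ × ℝ => f p.1 p.2)
      ((volume.restrict (Set.Ioi (0:ℝ))).prod (volume.restrict (Set.Ioo (0:ℝ) T))))
    (hf : UTnorm T f ≠ ⊤)
    (Δa Δt : ℝ) (hΔa : 0 < Δa) (hΔt : 0 < Δt) (hΔtT : Δt < T) :
    (∫⁻ t in Set.Ioo (0:ℝ) (T - Δt), ∫⁻ a in Set.Ioi (0:ℝ),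
        (‖f (a + Δa) (t + Δt) - ∫ τ in (0:ℝ)..1, f (a + τ * Δa) (t + τ * Δt)‖₊ : ℝ≥0∞))
      ≤ ENNReal.ofReal (Δa + Δt) * UTnorm T f :=
  stmt6_general T f hfmeas Δa Δt hΔa hΔt
end

section
/- For every fixed (ã, t) with ã ≥ 0 and 0 ≤ t < T, one has ∫_Ω | φ_ε(x, ã, t) − φ₀(x, ã, t) | dx → 0 as ε → 0⁺, where φ_ε(x, ã, t) := ∫_ã^{(T−t)/ε} exp( − ∫_ã^a ζ_ε(x, s, t + εs) ds )·ψ(x, a, t) da when ã < (T−t)/ε and φ_ε(x, ã, t) := 0 otherwise, and φ₀(x, ã, t) := ∫_ã^∞ exp( − ∫_ã^a ζ₀(x, s, t) ds )·ψ(x, a, t) da. -/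
open MeasureTheory Filter

/-- The transposed delay kernel
`φ_ε(x,ta,t) = ∫_ta^{(T−t)/ε} exp(−∫_ta^a ζ(x,s,t+εs) ds)·ψ(x,a,t) da`
(for `ta < (T−t)/ε`, and `0` otherwise); here `ζ` is the off-rate at a fixed
value of `ε`. -/
noncomputable def phiEps (T ε : ℝ) (ζ : ℝ → ℝ → ℝ → ℝ) (ψ : ℝ → ℝ → ℝ → ℝ)
    (x ta t : ℝ) : ℝ :=
  if ta < (T - t) / ε then
    ∫ a in ta..((T - t) / ε),
      Real.exp (-∫ s in ta..a, ζ x s (t + ε * s)) * ψ x a t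
  else 0

/-- The limiting kernel
`φ₀(x,ta,t) = ∫_ta^∞ exp(−∫_ta^a ζ₀(x,s,t) ds)·ψ(x,a,t) da`. -/
noncomputable def phiZero (ζ₀ : ℝ → ℝ → ℝ → ℝ) (ψ : ℝ → ℝ → ℝ → ℝ)
    (x ta t : ℝ) : ℝ :=
  ∫ a in Set.Ioi ta, Real.exp (-∫ s in ta..a, ζ₀ x s t) * ψ x a t

/-!
For fixed `x` both kernels are integrals of `p(a) = ψ(x, a, t)` against a survival weight
`exp (-∫_ta^a z)`, with rate `z(s) = ζ_ε(x, s, t + ε s)` up to the horizon `M = (T - t)/ε`,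
respectively `z₀(s) = ζ₀(x, s, t)` up to `∞`. Since both rates are at least `ζmin > 0`, the weights
decay like `exp (-ζmin (a - ta))`, so cutting both integrals at an age `R` costs
`O(exp (-ζmin (R - ta)))`, uniformly in `ε` and `x`. On `[ta, R]` the two rates differ by at most
`‖ζ_ε - ζ₀‖_∞ + L ε R`, which makes the two weights, hence the truncated integrals, close. Letting
first `ε → 0` and then `R → ∞` gives convergence uniform in `x`, hence in `L¹(0, 1)`.
-/

open Set Real intervalIntegral Topology

theorem abs_exp_neg_sub_exp_neg_le {u v : ℝ} (hu : 0 ≤ u) (hv : 0 ≤ v) :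
    |exp (-u) - exp (-v)| ≤ |u - v| := by
  wlog huv : u ≤ v generalizing u v
  · rw [abs_sub_comm, abs_sub_comm u]
    exact this hv hu (le_of_not_ge huv)
  have hsplit : exp (-v) = exp (-u) * exp (-(v - u)) := by rw [← exp_add]; ring_nf
  have hexp : 1 - (v - u) ≤ exp (-(v - u)) := one_sub_le_exp_neg _
  have hu1 : exp (-u) ≤ 1 := exp_le_one_iff.2 (by linarith)
  rw [abs_of_nonneg (sub_nonneg.2 (exp_le_exp.2 (neg_le_neg huv))),
    abs_of_nonpos (by linarith)]
  nlinarith [exp_pos (-u)]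

theorem Measurable.intervalIntegrable_of_bounded {f : ℝ → ℝ} {c C : ℝ} (hf : Measurable f)
    (h : ∀ s, c ≤ f s ∧ f s ≤ C) (a b : ℝ) : IntervalIntegrable f volume a b :=
  intervalIntegrable_const.mono_fun' hf.aestronglyMeasurable
    (ae_of_all _ fun s => abs_le_max_abs_abs (h s).1 (h s).2)

theorem integrableOn_Ioi_exp_neg_mul_sub {c : ℝ} (hc : 0 < c) (ta R : ℝ) :
    IntegrableOn (fun a => exp (-c * (a - ta))) (Ioi R) := by
  have h : IntegrableOn (fun a => exp (c * ta) * exp (-c * a)) (Ioi R) :=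
    (integrableOn_exp_mul_Ioi (neg_lt_zero.2 hc) R).const_mul _
  convert h using 2 with a
  rw [← exp_add]; ring_nf

theorem integral_Ioi_exp_neg_mul_sub {c : ℝ} (hc : 0 < c) (ta R : ℝ) :
    ∫ a in Ioi R, exp (-c * (a - ta)) = exp (-c * (R - ta)) / c := by
  have h : ∀ a, exp (-c * (a - ta)) = exp (c * ta) * exp (-c * a) := fun a => by
    rw [← exp_add]; ring_nf
  simp_rw [h, MeasureTheory.integral_const_mul, integral_exp_mul_Ioi (neg_lt_zero.2 hc)]
  field_simp

theorem abs_setIntegral_le_of_abs_le_exp {f : ℝ → ℝ} {S : Set ℝ} {c B ta R : ℝ} (hc : 0 < c)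
    (hB : 0 ≤ B) (hS : MeasurableSet S) (hSR : S ⊆ Ioi R)
    (hf : ∀ a ∈ S, |f a| ≤ B * exp (-c * (a - ta))) :
    |∫ a in S, f a| ≤ B / c * exp (-c * (R - ta)) := by
  have hmaj : IntegrableOn (fun a => B * exp (-c * (a - ta))) (Ioi R) :=
    (integrableOn_Ioi_exp_neg_mul_sub hc ta R).const_mul B
  calc |∫ a in S, f a| = ‖∫ a in S, f a‖ := (Real.norm_eq_abs _).symm
    _ ≤ ∫ a in S, B * exp (-c * (a - ta)) :=
        norm_integral_le_of_norm_le (hmaj.mono_set hSR) (ae_restrict_of_forall_mem hS hf)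
    _ ≤ ∫ a in Ioi R, B * exp (-c * (a - ta)) :=
        setIntegral_mono_set hmaj (ae_of_all _ fun a => by positivity) hSR.eventuallyLE
    _ = B / c * exp (-c * (R - ta)) := by
        rw [MeasureTheory.integral_const_mul, integral_Ioi_exp_neg_mul_sub hc]; ring

noncomputable def survivalWeight (z : ℝ → ℝ) (ta a : ℝ) : ℝ :=
  exp (-∫ s in ta..a, z s)

theorem abs_survivalWeight_mul_le {z : ℝ → ℝ} {c B ta a q : ℝ} (hta : ta ≤ a)
    (hz_int : IntervalIntegrable z volume ta a) (hz : ∀ s ∈ Icc ta a, c ≤ z s) (hq : |q| ≤ B) :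
    |survivalWeight z ta a * q| ≤ B * exp (-c * (a - ta)) := by
  have hint : (a - ta) * c ≤ ∫ s in ta..a, z s := by
    simpa using integral_mono_on hta intervalIntegrable_const hz_int hz
  rw [survivalWeight, abs_mul, abs_of_pos (exp_pos _), mul_comm B]
  exact mul_le_mul (exp_le_exp.2 (by linarith)) hq (abs_nonneg _) (exp_pos _).le

theorem abs_survivalWeight_sub_le {z z₀ : ℝ → ℝ} {K ta a : ℝ} (hta : ta ≤ a)
    (hz_int : IntervalIntegrable z volume ta a) (hz₀_int : IntervalIntegrable z₀ volume ta a)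
    (hz : ∀ s ∈ Icc ta a, 0 ≤ z s) (hz₀ : ∀ s ∈ Icc ta a, 0 ≤ z₀ s)
    (hzz₀ : ∀ s ∈ Icc ta a, |z s - z₀ s| ≤ K) :
    |survivalWeight z ta a - survivalWeight z₀ ta a| ≤ K * (a - ta) := by
  calc |survivalWeight z ta a - survivalWeight z₀ ta a|
      ≤ |(∫ s in ta..a, z s) - ∫ s in ta..a, z₀ s| :=
        abs_exp_neg_sub_exp_neg_le (integral_nonneg hta hz) (integral_nonneg hta hz₀)
    _ = ‖∫ s in ta..a, (z s - z₀ s)‖ := by rw [integral_sub hz_int hz₀_int, Real.norm_eq_abs]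
    _ ≤ K * |a - ta| := norm_integral_le_of_norm_le_const fun s hs =>
        hzz₀ s (Ioc_subset_Icc_self (uIoc_of_le hta ▸ hs))
    _ = K * (a - ta) := by rw [abs_of_nonneg (sub_nonneg.2 hta)]

theorem integrableOn_Ioi_survivalWeight_mul {z p : ℝ → ℝ} {c C B ta : ℝ} (hc : 0 < c)
    (hzm : Measurable z) (hpm : Measurable p) (hz : ∀ s, c ≤ z s ∧ z s ≤ C)
    (hp : ∀ a, |p a| ≤ B) :
    IntegrableOn (fun a => survivalWeight z ta a * p a) (Ioi ta) := by
  have hz_int := hzm.intervalIntegrable_of_bounded hz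
  have hm : Measurable fun a => survivalWeight z ta a * p a :=
    (measurable_exp.comp (continuous_primitive hz_int ta).measurable.neg).mul hpm
  exact ((integrableOn_Ioi_exp_neg_mul_sub hc ta ta).const_mul B).mono' hm.aestronglyMeasurable
    (ae_restrict_of_forall_mem measurableSet_Ioi fun a ha =>
      abs_survivalWeight_mul_le (le_of_lt ha) (hz_int ta a) (fun s _ => (hz s).1) (hp a))

theorem abs_intervalIntegral_survivalWeight_sub_le {z z₀ p : ℝ → ℝ} {B K ta R : ℝ}
    (htaR : ta ≤ R) (hz_int : ∀ a, IntervalIntegrable z volume ta a)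
    (hz₀_int : ∀ a, IntervalIntegrable z₀ volume ta a)
    (hz : ∀ s ∈ Icc ta R, 0 ≤ z s) (hz₀ : ∀ s ∈ Icc ta R, 0 ≤ z₀ s) (hp : ∀ a, |p a| ≤ B)
    (hzz₀ : ∀ s ∈ Icc ta R, |z s - z₀ s| ≤ K) :
    |∫ a in ta..R, (survivalWeight z ta a * p a - survivalWeight z₀ ta a * p a)| ≤
      B * K * (R - ta) ^ 2 := by
  have hK : 0 ≤ K := (abs_nonneg _).trans (hzz₀ ta ⟨le_rfl, htaR⟩)
  have hpt : ∀ a ∈ uIoc ta R,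
      ‖survivalWeight z ta a * p a - survivalWeight z₀ ta a * p a‖ ≤ B * K * (R - ta) := by
    intro a ha
    rw [uIoc_of_le htaR] at ha
    have hIcc : Icc ta a ⊆ Icc ta R := Icc_subset_Icc_right ha.2
    have hclose := abs_survivalWeight_sub_le ha.1.le (hz_int a) (hz₀_int a)
      (fun s hs => hz s (hIcc hs)) (fun s hs => hz₀ s (hIcc hs)) (fun s hs => hzz₀ s (hIcc hs))
    have hKa : K * (a - ta) ≤ K * (R - ta) := by gcongr; exact ha.2
    rw [Real.norm_eq_abs, ← sub_mul, abs_mul]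
    calc _ ≤ K * (R - ta) * B :=
          mul_le_mul (hclose.trans hKa) (hp a) (abs_nonneg _) (by positivity)
      _ = B * K * (R - ta) := by ring
  have h := norm_integral_le_of_norm_le_const hpt
  rw [Real.norm_eq_abs, abs_of_nonneg (sub_nonneg.2 htaR)] at h
  linarith

theorem abs_truncated_survivalWeight_integral_sub_le_of_bounded {z z₀ p : ℝ → ℝ}
    {c C B K ta R M : ℝ} (hc : 0 < c) (htaR : ta ≤ R) (hRM : R ≤ M)
    (hzm : Measurable z) (hz₀m : Measurable z₀) (hpm : Measurable p)
    (hz : ∀ s, c ≤ z s ∧ z s ≤ C) (hz₀ : ∀ s, c ≤ z₀ s ∧ z₀ s ≤ C) (hp : ∀ a, |p a| ≤ B)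
    (hzz₀ : ∀ s ∈ Icc ta R, |z s - z₀ s| ≤ K) :
    |(∫ a in ta..M, survivalWeight z ta a * p a) - ∫ a in Ioi ta, survivalWeight z₀ ta a * p a| ≤
      B * K * (R - ta) ^ 2 + 2 * (B / c * exp (-c * (R - ta))) := by
  have hB : 0 ≤ B := (abs_nonneg _).trans (hp 0)
  set g : ℝ → ℝ := fun a => survivalWeight z ta a * p a
  set g₀ : ℝ → ℝ := fun a => survivalWeight z₀ ta a * p a
  have hg : IntegrableOn g (Ioi ta) := integrableOn_Ioi_survivalWeight_mul hc hzm hpm hz hp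
  have hg₀ : IntegrableOn g₀ (Ioi ta) := integrableOn_Ioi_survivalWeight_mul hc hz₀m hpm hz₀ hp
  have hz_int := hzm.intervalIntegrable_of_bounded hz
  have hz₀_int := hz₀m.intervalIntegrable_of_bounded hz₀
  have hint : ∀ {f : ℝ → ℝ} {u v}, IntegrableOn f (Ioi ta) → ta ≤ u → u ≤ v →
      IntervalIntegrable f volume u v := fun hf hu huv =>
    (intervalIntegrable_iff_integrableOn_Ioc_of_le huv).2
      (hf.mono_set (Ioc_subset_Ioi_self.trans (Ioi_subset_Ioi hu)))
  have hdecomp : (∫ a in ta..M, g a) - ∫ a in Ioi ta, g₀ a =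
      (∫ a in ta..R, (g a - g₀ a)) + (∫ a in Ioc R M, g a) - ∫ a in Ioi R, g₀ a := by
    rw [← integral_add_adjacent_intervals (hint hg le_rfl htaR) (hint hg htaR hRM),
      ← integral_interval_add_Ioi hg₀ (hg₀.mono_set (Ioi_subset_Ioi htaR)), integral_of_le hRM,
      integral_sub (hint hg le_rfl htaR) (hint hg₀ le_rfl htaR)]
    ring
  have hmain : |∫ a in ta..R, (g a - g₀ a)| ≤ B * K * (R - ta) ^ 2 :=
    abs_intervalIntegral_survivalWeight_sub_le htaR (hz_int ta) (hz₀_int ta)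
      (fun s _ => hc.le.trans (hz s).1) (fun s _ => hc.le.trans (hz₀ s).1) hp hzz₀
  have htail : |∫ a in Ioc R M, g a| ≤ B / c * exp (-c * (R - ta)) :=
    abs_setIntegral_le_of_abs_le_exp hc hB measurableSet_Ioc Ioc_subset_Ioi_self fun a ha =>
      abs_survivalWeight_mul_le (htaR.trans ha.1.le) (hz_int ta a) (fun s _ => (hz s).1) (hp a)
  have htail₀ : |∫ a in Ioi R, g₀ a| ≤ B / c * exp (-c * (R - ta)) :=
    abs_setIntegral_le_of_abs_le_exp hc hB measurableSet_Ioi subset_rfl fun a ha =>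
      abs_survivalWeight_mul_le (htaR.trans (le_of_lt ha)) (hz₀_int ta a)
        (fun s _ => (hz₀ s).1) (hp a)
  rw [hdecomp]
  calc _ ≤ |∫ a in ta..R, (g a - g₀ a)| + |∫ a in Ioc R M, g a| + |∫ a in Ioi R, g₀ a| :=
        (abs_sub _ _).trans (add_le_add_left (abs_add_le _ _) _)
    _ ≤ _ := by linarith

/-- Only the values of `z` on `[ta, M]` and of `z₀` on `[ta, ∞)` enter, so clamping both rates
into `[c, C]` reduces this to the globally bounded case. -/
theorem abs_truncated_survivalWeight_integral_sub_le {z z₀ p : ℝ → ℝ} {c C B K ta R M : ℝ}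
    (hc : 0 < c) (htaR : ta ≤ R) (hRM : R ≤ M)
    (hzm : Measurable z) (hz₀m : Measurable z₀) (hpm : Measurable p)
    (hz : ∀ s ∈ Icc ta M, c ≤ z s ∧ z s ≤ C) (hz₀ : ∀ s ∈ Ici ta, c ≤ z₀ s ∧ z₀ s ≤ C)
    (hp : ∀ a, |p a| ≤ B) (hzz₀ : ∀ s ∈ Icc ta R, |z s - z₀ s| ≤ K) :
    |(∫ a in ta..M, survivalWeight z ta a * p a) - ∫ a in Ioi ta, survivalWeight z₀ ta a * p a| ≤
      B * K * (R - ta) ^ 2 + 2 * (B / c * exp (-c * (R - ta))) := by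
  have hcC : c ≤ C := (hz₀ ta self_mem_Ici).1.trans (hz₀ ta self_mem_Ici).2
  set clamp : ℝ → ℝ := fun v => projIcc c C hcC v
  have hclamp_m : Measurable clamp := (continuous_subtype_val.comp continuous_projIcc).measurable
  have hclamp_eq : ∀ v, c ≤ v ∧ v ≤ C → clamp v = v := fun v hv =>
    congrArg Subtype.val (projIcc_of_mem hcC hv)
  have hcongr : ∀ {w w' : ℝ → ℝ} {a}, ta ≤ a → EqOn w w' (Icc ta a) →
      survivalWeight w ta a = survivalWeight w' ta a := fun ha h => by
    rw [survivalWeight, integral_congr (uIcc_of_le ha ▸ h), survivalWeight]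
  have hI : ∫ a in ta..M, survivalWeight z ta a * p a =
      ∫ a in ta..M, survivalWeight (clamp ∘ z) ta a * p a :=
    integral_congr fun a ha => by
      rw [uIcc_of_le (htaR.trans hRM)] at ha
      rw [hcongr (w' := clamp ∘ z) ha.1 fun s hs =>
        (hclamp_eq _ (hz s ⟨hs.1, hs.2.trans ha.2⟩)).symm]
  have hI₀ : ∫ a in Ioi ta, survivalWeight z₀ ta a * p a =
      ∫ a in Ioi ta, survivalWeight (clamp ∘ z₀) ta a * p a :=
    setIntegral_congr_fun measurableSet_Ioi fun a ha => by
      rw [hcongr (w' := clamp ∘ z₀) (le_of_lt ha) fun s hs => (hclamp_eq _ (hz₀ s hs.1)).symm]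
  rw [hI, hI₀]
  refine abs_truncated_survivalWeight_integral_sub_le_of_bounded hc htaR hRM
    (hclamp_m.comp hzm) (hclamp_m.comp hz₀m) hpm (fun s => (projIcc c C hcC _).2)
    (fun s => (projIcc c C hcC _).2) hp fun s hs => ?_
  rw [Function.comp_apply, Function.comp_apply, hclamp_eq _ (hz s ⟨hs.1, hs.2.trans hRM⟩),
    hclamp_eq _ (hz₀ s hs.1)]
  exact hzz₀ s hs

theorem abs_phiEps_sub_phiZero_le {T ζmin ζmax B ε x ta t R κ : ℝ}
    {ζε ζ₀ ψ : ℝ → ℝ → ℝ → ℝ} (hζmin : 0 < ζmin) (hε : 0 < ε) (hta : 0 ≤ ta) (htaR : ta ≤ R)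
    (ht : 0 ≤ t) (hεR : ε * R < T - t)
    (hζεm : Measurable (fun p : ℝ × ℝ × ℝ => ζε p.1 p.2.1 p.2.2))
    (hζ₀m : Measurable (fun p : ℝ × ℝ × ℝ => ζ₀ p.1 p.2.1 p.2.2))
    (hψm : Measurable (fun p : ℝ × ℝ × ℝ => ψ p.1 p.2.1 p.2.2))
    (hζε : ∀ a ∈ Ici (0:ℝ), ∀ τ ∈ Icc (0:ℝ) T, ζmin ≤ ζε x a τ ∧ ζε x a τ ≤ ζmax)
    (hζ₀ : ∀ a ∈ Ici (0:ℝ), ζmin ≤ ζ₀ x a t ∧ ζ₀ x a t ≤ ζmax) (hψ : ∀ a, |ψ x a t| ≤ B)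
    (hclose : ∀ s ∈ Icc 0 R, |ζε x s (t + ε * s) - ζ₀ x s t| ≤ κ) :
    |phiEps T ε ζε ψ x ta t - phiZero ζ₀ ψ x ta t| ≤
      B * (R - ta) ^ 2 * κ + 2 * (B / ζmin * exp (-ζmin * (R - ta))) := by
  have hRM : R < (T - t) / ε := (lt_div_iff₀ hε).2 (by linarith)
  have htime : ∀ s ∈ Icc 0 ((T - t) / ε), t + ε * s ∈ Icc 0 T := fun s hs => by
    have := mul_le_mul_of_nonneg_left hs.2 hε.le
    rw [mul_div_cancel₀ _ hε.ne'] at this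
    exact ⟨by nlinarith [hs.1], by linarith⟩
  rw [phiEps, if_pos (by linarith), phiZero]
  calc _ ≤ B * κ * (R - ta) ^ 2 + 2 * (B / ζmin * exp (-ζmin * (R - ta))) :=
        abs_truncated_survivalWeight_integral_sub_le hζmin htaR hRM.le
          (hζεm.comp (f := fun s => (x, s, t + ε * s)) (by fun_prop))
          (hζ₀m.comp (f := fun s => (x, s, t)) (by fun_prop))
          (hψm.comp (f := fun a => (x, a, t)) (by fun_prop))
          (fun s hs => hζε s (hta.trans hs.1) _ (htime s ⟨hta.trans hs.1, hs.2⟩))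
          (fun s hs => hζ₀ s (le_trans hta hs)) hψ
          (fun s hs => hclose s ⟨hta.trans hs.1, hs.2⟩)
    _ = _ := by ring

/-- Uniform convergence controls `ζ_ε - ζ₀`; the time-Lipschitz bound controls the shift
`ε s ≤ ε R` along the characteristic. -/
theorem eventually_abs_sub_le_along_characteristic {X : Set ℝ} {T L t R κ : ℝ}
    {ζ : ℝ → ℝ → ℝ → ℝ → ℝ} {ζ₀ : ℝ → ℝ → ℝ → ℝ}
    (hζcv : ∀ δ > (0:ℝ), ∀ᶠ ε in 𝓝[>] (0:ℝ), ∀ x ∈ X, ∀ a ∈ Ici (0:ℝ), ∀ t ∈ Icc (0:ℝ) T,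
      |ζ ε x a t - ζ₀ x a t| ≤ δ)
    (hζ₀Lip : ∀ x a t₁ t₂ : ℝ, |ζ₀ x a t₂ - ζ₀ x a t₁| ≤ L * |t₂ - t₁|)
    (ht : t ∈ Ico 0 T) (hκ : 0 < κ) :
    ∀ᶠ ε in 𝓝[>] (0:ℝ), ∀ x ∈ X, ∀ s ∈ Icc 0 R,
      |ζ ε x s (t + ε * s) - ζ₀ x s t| ≤ κ := by
  have hshift : Tendsto (fun ε : ℝ => (ε * R, ε * (|L| * R))) (𝓝[>] 0) (𝓝 (0, 0)) :=
    tendsto_nhdsWithin_of_tendsto_nhds (by simpa using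
      ((continuous_mul_const R).prodMk (continuous_mul_const (|L| * R))).tendsto 0)
  filter_upwards [hζcv (κ / 2) (half_pos hκ), self_mem_nhdsWithin,
    hshift.eventually ((eventually_le_nhds (sub_pos.2 ht.2)).prodMk_nhds
      (eventually_le_nhds (half_pos hκ)))] with ε hcv hε hsmall x hx s hs
  have hεs : ε * s ≤ ε * R := mul_le_mul_of_nonneg_left hs.2 (le_of_lt hε)
  have hεs₀ : 0 ≤ ε * s := mul_nonneg (le_of_lt hε) hs.1
  have hcv' := hcv x hx s hs.1 (t + ε * s) ⟨by linarith [ht.1], by linarith [hsmall.1]⟩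
  have hlip : |ζ₀ x s (t + ε * s) - ζ₀ x s t| ≤ κ / 2 := by
    refine (hζ₀Lip x s t (t + ε * s)).trans ?_
    rw [add_sub_cancel_left, abs_of_nonneg hεs₀]
    calc L * (ε * s) ≤ |L| * (ε * R) := mul_le_mul (le_abs_self L) hεs hεs₀ (abs_nonneg L)
      _ ≤ κ / 2 := by linarith [hsmall.2]
  calc |ζ ε x s (t + ε * s) - ζ₀ x s t|
      ≤ |ζ ε x s (t + ε * s) - ζ₀ x s (t + ε * s)| + |ζ₀ x s (t + ε * s) - ζ₀ x s t| :=
        abs_sub_le _ _ _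
    _ ≤ κ := by linarith

theorem tendsto_nhds_zero_of_eventually_abs_le {α : Type*} {l : Filter α} {f : α → ℝ}
    {C g : ℝ → ℝ} (hg : Tendsto g atTop (𝓝 0))
    (h : ∀ᶠ R in atTop, ∀ κ > 0, ∀ᶠ ε in l, |f ε| ≤ C R * κ + g R) :
    Tendsto f l (𝓝 0) := by
  rw [Metric.tendsto_nhds]
  intro η hη
  obtain ⟨R, hR, hgR⟩ := (h.and (hg.eventually (eventually_lt_nhds (half_pos hη)))).exists
  filter_upwards [hR (η / 2 / (|C R| + 1)) (by positivity)] with ε hε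
  have hCκ : C R * (η / 2 / (|C R| + 1)) < η / 2 := by
    calc C R * (η / 2 / (|C R| + 1)) ≤ |C R| * (η / 2 / (|C R| + 1)) :=
          mul_le_mul_of_nonneg_right (le_abs_self _) (by positivity)
      _ < (|C R| + 1) * (η / 2 / (|C R| + 1)) := by gcongr; linarith
      _ = η / 2 := by field_simp
  rw [Real.dist_eq, sub_zero]
  linarith

theorem stmt9_general
    (T ζmin ζmax L B : ℝ) (hζmin : 0 < ζmin)
    (ζ : ℝ → ℝ → ℝ → ℝ → ℝ) (ζ₀ : ℝ → ℝ → ℝ → ℝ)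
    (hζmeas : ∀ ε > (0:ℝ), Measurable (fun p : ℝ × ℝ × ℝ => ζ ε p.1 p.2.1 p.2.2))
    (hζ₀meas : Measurable (fun p : ℝ × ℝ × ℝ => ζ₀ p.1 p.2.1 p.2.2))
    (hζbd : ∀ ε > (0:ℝ), ∀ x ∈ Set.Ioo (0:ℝ) 1, ∀ a ∈ Set.Ici (0:ℝ),
      ∀ t ∈ Set.Icc (0:ℝ) T, ζmin ≤ ζ ε x a t ∧ ζ ε x a t ≤ ζmax)
    (hζ₀bd : ∀ x ∈ Set.Ioo (0:ℝ) 1, ∀ a ∈ Set.Ici (0:ℝ),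
      ∀ t ∈ Set.Icc (0:ℝ) T, ζmin ≤ ζ₀ x a t ∧ ζ₀ x a t ≤ ζmax)
    (hζcv : ∀ δ > (0:ℝ), ∀ᶠ ε in nhdsWithin (0:ℝ) (Set.Ioi 0),
      ∀ x ∈ Set.Ioo (0:ℝ) 1, ∀ a ∈ Set.Ici (0:ℝ), ∀ t ∈ Set.Icc (0:ℝ) T,
        |ζ ε x a t - ζ₀ x a t| ≤ δ)
    (hζ₀Lip : ∀ x a t₁ t₂ : ℝ, |ζ₀ x a t₂ - ζ₀ x a t₁| ≤ L * |t₂ - t₁|)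
    (ψ : ℝ → ℝ → ℝ → ℝ)
    (hψmeas : Measurable (fun p : ℝ × ℝ × ℝ => ψ p.1 p.2.1 p.2.2))
    (hψbd : ∀ x a t : ℝ, |ψ x a t| ≤ B) :
    ∀ ta ∈ Set.Ici (0:ℝ), ∀ t ∈ Set.Ico (0:ℝ) T,
      Filter.Tendsto
        (fun ε => ∫ x in Set.Ioo (0:ℝ) 1,
          |phiEps T ε (ζ ε) ψ x ta t - phiZero ζ₀ ψ x ta t|)
        (nhdsWithin (0:ℝ) (Set.Ioi 0)) (nhds 0) := by
  intro ta hta t ht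
  have htail : Tendsto (fun R => 2 * (B / ζmin * exp (-ζmin * (R - ta)))) atTop (𝓝 0) := by
    have hlin : Tendsto (fun R => -ζmin * (R - ta)) atTop atBot :=
      (tendsto_atTop_add_const_right _ (-ta) tendsto_id).const_mul_atTop_of_neg
        (neg_lt_zero.2 hζmin)
    simpa using ((tendsto_exp_atBot.comp hlin).const_mul (B / ζmin)).const_mul 2
  refine tendsto_nhds_zero_of_eventually_abs_le (C := fun R => B * (R - ta) ^ 2) htail ?_
  filter_upwards [eventually_ge_atTop ta] with R hR κ hκ
  have hsmall : ∀ᶠ ε in 𝓝[>] (0:ℝ), ε * R < T - t :=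
    tendsto_nhdsWithin_of_tendsto_nhds ((continuous_mul_const R).tendsto' 0 0 (zero_mul _))
      |>.eventually (eventually_lt_nhds (sub_pos.2 ht.2))
  filter_upwards [eventually_abs_sub_le_along_characteristic (R := R) hζcv hζ₀Lip ht hκ,
    self_mem_nhdsWithin, hsmall] with ε hclose (hε : 0 < ε) hεR
  have hpt : ∀ x ∈ Ioo (0:ℝ) 1, ‖|phiEps T ε (ζ ε) ψ x ta t - phiZero ζ₀ ψ x ta t|‖ ≤
      B * (R - ta) ^ 2 * κ + 2 * (B / ζmin * exp (-ζmin * (R - ta))) := fun x hx => by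
    rw [Real.norm_eq_abs, abs_abs]
    exact abs_phiEps_sub_phiZero_le hζmin hε hta hR ht.1 hεR (hζmeas ε hε) hζ₀meas hψmeas
      (hζbd ε hε x hx) (fun a ha => hζ₀bd x hx a ha t ⟨ht.1, ht.2.le⟩) (fun a => hψbd x a t)
      (hclose x hx)
  simpa using norm_setIntegral_le_of_norm_le_const (μ := volume) measure_Ioo_lt_top hpt

/-- (Corollary `coro.cvg.phi`.) For every fixed `(ta,t)` with
`ta ≥ 0` and `0 ≤ t < T`, `‖φ_ε(·,ta,t) − φ₀(·,ta,t)‖_{L¹(Ω)} → 0` as `ε → 0⁺`. -/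
theorem stmt9
    (T ζmin ζmax L B : ℝ) (hT : 0 < T) (hζmin : 0 < ζmin)
    (ζ : ℝ → ℝ → ℝ → ℝ → ℝ) (ζ₀ : ℝ → ℝ → ℝ → ℝ)
    (hζmeas : ∀ ε > (0:ℝ), Measurable (fun p : ℝ × ℝ × ℝ => ζ ε p.1 p.2.1 p.2.2))
    (hζ₀meas : Measurable (fun p : ℝ × ℝ × ℝ => ζ₀ p.1 p.2.1 p.2.2))
    (hζbd : ∀ ε > (0:ℝ), ∀ x ∈ Set.Ioo (0:ℝ) 1, ∀ a ∈ Set.Ici (0:ℝ),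
      ∀ t ∈ Set.Icc (0:ℝ) T, ζmin ≤ ζ ε x a t ∧ ζ ε x a t ≤ ζmax)
    (hζ₀bd : ∀ x ∈ Set.Ioo (0:ℝ) 1, ∀ a ∈ Set.Ici (0:ℝ),
      ∀ t ∈ Set.Icc (0:ℝ) T, ζmin ≤ ζ₀ x a t ∧ ζ₀ x a t ≤ ζmax)
    (hζcv : ∀ δ > (0:ℝ), ∀ᶠ ε in nhdsWithin (0:ℝ) (Set.Ioi 0),
      ∀ x ∈ Set.Ioo (0:ℝ) 1, ∀ a ∈ Set.Ici (0:ℝ), ∀ t ∈ Set.Icc (0:ℝ) T,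
        |ζ ε x a t - ζ₀ x a t| ≤ δ)
    (hζ₀Lip : ∀ x a t₁ t₂ : ℝ, |ζ₀ x a t₂ - ζ₀ x a t₁| ≤ L * |t₂ - t₁|)
    (ψ : ℝ → ℝ → ℝ → ℝ)
    (hψmeas : Measurable (fun p : ℝ × ℝ × ℝ => ψ p.1 p.2.1 p.2.2))
    (hψbd : ∀ x a t : ℝ, |ψ x a t| ≤ B) :
    ∀ ta ∈ Set.Ici (0:ℝ), ∀ t ∈ Set.Ico (0:ℝ) T,
      Filter.Tendsto
        (fun ε => ∫ x in Set.Ioo (0:ℝ) 1,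
          |phiEps T ε (ζ ε) ψ x ta t - phiZero ζ₀ ψ x ta t|)
        (nhdsWithin (0:ℝ) (Set.Ioi 0)) (nhds 0) :=
  stmt9_general T ζmin ζmax L B hζmin ζ ζ₀ hζmeas hζ₀meas hζbd hζ₀bd hζcv hζ₀Lip ψ hψmeas hψbd
end

section
/- Let g : ℝ₊ → [0,∞) be measurable with ∫₀^∞ (1+a)·g(a) da < ∞, and let c > 0, T > 0, ε > 0. Then ∫₀^{T/ε} g(a)·( exp( −c·( T/(2ε) − a/2 ) ) − exp( −c·T/(2ε) ) ) da ≤ (ε/T)·∫₀^∞ (1+a)·g(a) da. -/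
open MeasureTheory

/-- Key pointwise estimate: for `0 ≤ a ≤ M` and `c > 0`,
`e^{-c(M/2 - a/2)} - e^{-cM/2} ≤ (1+a)/M`. -/
lemma stmt10_key (c M a : ℝ) (hc : 0 < c) (hM : 0 < M) (ha : 0 ≤ a) (haM : a ≤ M) :
    Real.exp (-(c * (M / 2 - a / 2))) - Real.exp (-(c * M / 2)) ≤ (1 + a) / M := by
  set u : ℝ := c * (M - a) / 2 with hu
  have hu0 : 0 ≤ u := by
    have : 0 ≤ M - a := by linarith
    rw [hu]; positivity
  have hupos : (0:ℝ) < 1 + u := by linarith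
  have hrew : Real.exp (-(c * (M / 2 - a / 2))) - Real.exp (-(c * M / 2))
      = Real.exp (-u) * (1 - Real.exp (-(c * a / 2))) := by
    have h0 : -(c * (M / 2 - a / 2)) = -u := by rw [hu]; ring
    have h1 : -u + -(c * a / 2) = -(c * M / 2) := by rw [hu]; ring
    rw [h0, mul_sub, mul_one, ← Real.exp_add, h1]
  rw [hrew]
  have hexp_u : Real.exp (-u) ≤ 1 / (1 + u) := by
    have h1 : (1:ℝ) + u ≤ Real.exp u := by
      have := Real.add_one_le_exp u; linarith
    have h2 : 1 / Real.exp u ≤ 1 / (1 + u) := one_div_le_one_div_of_le hupos h1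
    rw [Real.exp_neg, ← one_div]; exact h2
  have hone : 1 - Real.exp (-(c * a / 2)) ≤ 1 := by
    have := Real.exp_pos (-(c * a / 2)); linarith
  have hlin : 1 - Real.exp (-(c * a / 2)) ≤ c * a / 2 := by
    have := Real.add_one_le_exp (-(c * a / 2)); linarith
  have hnn : 0 ≤ 1 - Real.exp (-(c * a / 2)) := by
    have h : -(c * a / 2) ≤ 0 := by
      have : 0 ≤ c * a / 2 := by positivity
      linarith
    have : Real.exp (-(c * a / 2)) ≤ 1 := Real.exp_le_one_iff.mpr h
    linarith
  rcases le_or_gt (c * a) 2 with hca | hca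
  · -- small case : use 1 - e^{-x} ≤ x
    have h1 : Real.exp (-u) * (1 - Real.exp (-(c * a / 2))) ≤ (1 / (1 + u)) * (c * a / 2) :=
      mul_le_mul hexp_u hlin hnn (by positivity)
    have h2 : (1 / (1 + u)) * (c * a / 2) ≤ a / M := by
      rw [div_mul_eq_mul_div, one_mul, div_le_div_iff₀ hupos hM]
      have hcm : c * M / 2 ≤ 1 + u := by rw [hu]; nlinarith
      nlinarith [mul_nonneg (mul_nonneg hc.le ha) hM.le]
    have h3 : a / M ≤ (1 + a) / M := by gcongr; linarith
    linarith
  · -- large case : use 1 - e^{-x} ≤ 1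
    have h1 : Real.exp (-u) * (1 - Real.exp (-(c * a / 2))) ≤ 1 / (1 + u) := by
      calc Real.exp (-u) * (1 - Real.exp (-(c * a / 2)))
          ≤ Real.exp (-u) * 1 := mul_le_mul_of_nonneg_left hone (Real.exp_pos _).le
        _ = Real.exp (-u) := mul_one _
        _ ≤ 1 / (1 + u) := hexp_u
    have h2 : 1 / (1 + u) ≤ (1 + a) / M := by
      rw [div_le_div_iff₀ hupos hM]
      rw [hu]; nlinarith
    linarith

/-- Weighted exponential tail estimate (bound on the term
`ℓ_{1,1,1}` in the appendix): for measurable `g ≥ 0` with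
`∫₀^∞ (1+a) g(a) da < ∞` and `c, T, ε > 0`,
`∫₀^{T/ε} g(a)·(e^{−c(T/(2ε) − a/2)} − e^{−cT/(2ε)}) da ≤ (ε/T)·∫₀^∞ (1+a) g(a) da`. -/
theorem stmt10
    (g : ℝ → ℝ) (hgm : Measurable g) (hg0 : ∀ a, 0 ≤ g a)
    (hint : IntegrableOn (fun a => (1 + a) * g a) (Set.Ioi 0))
    (c T ε : ℝ) (hc : 0 < c) (hT : 0 < T) (hε : 0 < ε) :
    (∫ a in (0:ℝ)..(T / ε),
        g a * (Real.exp (-(c * (T / (2 * ε) - a / 2))) - Real.exp (-(c * T / (2 * ε)))))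
      ≤ (ε / T) * ∫ a in Set.Ioi (0:ℝ), (1 + a) * g a := by
  set M : ℝ := T / ε with hMdef
  have hM : 0 < M := by positivity
  have hMhalf : T / (2 * ε) = M / 2 := by rw [hMdef]; ring
  have hMhalf' : c * T / (2 * ε) = c * M / 2 := by rw [hMdef]; ring
  have hεT : ε / T = 1 / M := by rw [hMdef]; field_simp
  set f : ℝ → ℝ := fun a => g a * (Real.exp (-(c * (M / 2 - a / 2))) - Real.exp (-(c * M / 2))) with hf
  have hfbound : ∀ a ∈ Set.Ioc (0:ℝ) M, f a ≤ (1 / M) * ((1 + a) * g a) := by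
    intro a ha
    have key := stmt10_key c M a hc hM ha.1.le ha.2
    have : f a ≤ g a * ((1 + a) / M) := mul_le_mul_of_nonneg_left key (hg0 a)
    calc f a ≤ g a * ((1 + a) / M) := this
      _ = (1 / M) * ((1 + a) * g a) := by ring
  have hfnn : ∀ a ∈ Set.Ioc (0:ℝ) M, 0 ≤ f a := by
    intro a ha
    apply mul_nonneg (hg0 a)
    have h : -(c * M / 2) ≤ -(c * (M / 2 - a / 2)) := by nlinarith [ha.1.le, ha.2]
    have := Real.exp_le_exp.mpr h
    linarith
  have hboundint : IntegrableOn (fun a => (1 / M) * ((1 + a) * g a)) (Set.Ioc 0 M) := by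
    apply Integrable.const_mul
    exact hint.mono_set Set.Ioc_subset_Ioi_self
  have hfmeas : Measurable f := by
    apply Measurable.mul hgm
    exact (Real.measurable_exp.comp (by fun_prop)).sub measurable_const
  have hfint : IntegrableOn f (Set.Ioc 0 M) := by
    apply Integrable.mono hboundint hfmeas.aestronglyMeasurable.restrict
    filter_upwards [ae_restrict_mem measurableSet_Ioc] with a ha
    rw [Real.norm_eq_abs, abs_of_nonneg (hfnn a ha)]
    exact (hfbound a ha).trans (le_abs_self _)
  have step1 : (∫ a in (0:ℝ)..M, f a) = ∫ a in Set.Ioc (0:ℝ) M, f a :=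
    intervalIntegral.integral_of_le hM.le
  have step2 : (∫ a in Set.Ioc (0:ℝ) M, f a)
      ≤ ∫ a in Set.Ioc (0:ℝ) M, (1 / M) * ((1 + a) * g a) :=
    setIntegral_mono_on hfint hboundint measurableSet_Ioc hfbound
  have step3 : (∫ a in Set.Ioc (0:ℝ) M, (1 / M) * ((1 + a) * g a))
      ≤ ∫ a in Set.Ioi (0:ℝ), (1 / M) * ((1 + a) * g a) := by
    apply setIntegral_mono_set (hint.const_mul (1 / M))
    · filter_upwards [ae_restrict_mem measurableSet_Ioi] with a (ha : a ∈ Set.Ioi (0:ℝ))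
      have : (0:ℝ) < a := ha
      exact mul_nonneg (by positivity) (mul_nonneg (by linarith) (hg0 a))
    · exact HasSubset.Subset.eventuallyLE Set.Ioc_subset_Ioi_self
  have step4 : (∫ a in Set.Ioi (0:ℝ), (1 / M) * ((1 + a) * g a))
      = (1 / M) * ∫ a in Set.Ioi (0:ℝ), (1 + a) * g a := integral_const_mul _ _
  have final := (step1 ▸ step2).trans (step3.trans_eq step4)
  rw [hεT]
  simpa [hf, hMhalf, hMhalf'] using final
end

section
/- Let ζ : ℝ₊ → ℝ be measurable with 0 < ζ_min ≤ ζ(a) ≤ ζ_max for all a ≥ 0, and let β > 0. Then there exists a unique Lebesgue-integrable function ρ : ℝ₊ → ℝ satisfying, for every a ≥ 0, ρ(a) = β·( 1 − ∫₀^∞ ρ(ã) dã )·exp( − ∫₀^a ζ(s) ds ). Moreover this ρ is nonnegative, and its total mass μ₀ := ∫₀^∞ ρ(a) da satisfies 0 < μ₀ < 1; explicitly μ₀ = βI/(1 + βI) where I := ∫₀^∞ exp( − ∫₀^a ζ(s) ds ) da. -/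
/-!
Any solution is `β (1 - μ)` times the survival function `E a = exp (-∫₀^a ζ)`, so integrating
the equation over `a > 0` turns it into the scalar equation `μ = β (1 - μ) I` for its mass `μ`,
whose unique solution is `μ = β I / (1 + β I)`. Conversely this `μ` defines a solution. The
survival function is integrable because `ζ ≥ ζmin > 0` makes it decay like `exp (-ζmin a)`.
-/

open MeasureTheory Set

noncomputable def survival (ζ : ℝ → ℝ) (a : ℝ) : ℝ :=
  Real.exp (-∫ s in (0:ℝ)..a, ζ s)

theorem continuousOn_primitive_Ici {f : ℝ → ℝ}
    (hf : ∀ b, 0 ≤ b → IntervalIntegrable f volume 0 b) :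
    ContinuousOn (fun a => ∫ s in (0:ℝ)..a, f s) (Ici 0) := by
  intro a ha
  have ha' : (0:ℝ) ≤ a + 1 := by linarith [mem_Ici.1 ha]
  have hcont := intervalIntegral.continuousOn_primitive_interval' (hf _ ha') left_mem_uIcc a
    (by rw [uIcc_of_le ha']; exact ⟨ha, by linarith⟩)
  have hnhds : Ici 0 ∩ Iio (a + 1) ∈ nhdsWithin a (Ici 0) :=
    inter_mem_nhdsWithin _ (Iio_mem_nhds (lt_add_one a))
  refine hcont.mono_of_mem_nhdsWithin (Filter.mem_of_superset hnhds ?_)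
  rintro x ⟨hx0, hx1⟩
  rw [uIcc_of_le ha']
  exact ⟨hx0, le_of_lt hx1⟩

section BoundedRate

variable {ζ : ℝ → ℝ} {m M : ℝ}

theorem intervalIntegrable_of_bounded_on_Ici (hζm : Measurable ζ)
    (hζ : ∀ a, 0 ≤ a → m ≤ ζ a ∧ ζ a ≤ M) {b : ℝ} (hb : 0 ≤ b) :
    IntervalIntegrable ζ volume 0 b := by
  rw [intervalIntegrable_iff_integrableOn_Icc_of_le hb]
  refine Measure.integrableOn_of_bounded (M := max |m| |M|) measure_Icc_lt_top.ne
    hζm.aestronglyMeasurable ((ae_restrict_iff' measurableSet_Icc).2 (.of_forall fun a ha => ?_))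
  obtain ⟨hlo, hhi⟩ := hζ a ha.1
  exact abs_le_max_abs_abs hlo hhi

theorem mul_le_intervalIntegral_of_le (hζm : Measurable ζ)
    (hζ : ∀ a, 0 ≤ a → m ≤ ζ a ∧ ζ a ≤ M) {b : ℝ} (hb : 0 ≤ b) :
    m * b ≤ ∫ s in (0:ℝ)..b, ζ s := by
  have := intervalIntegral.integral_mono_on hb intervalIntegrable_const
    (intervalIntegrable_of_bounded_on_Ici hζm hζ hb) fun s hs => (hζ s hs.1).1
  simpa [mul_comm] using this

theorem integrableOn_survival (hζm : Measurable ζ) (hm : 0 < m)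
    (hζ : ∀ a, 0 ≤ a → m ≤ ζ a ∧ ζ a ≤ M) : IntegrableOn (survival ζ) (Ioi 0) := by
  have hcont : ContinuousOn (survival ζ) (Ici 0) :=
    (continuousOn_primitive_Ici fun b => intervalIntegrable_of_bounded_on_Ici hζm hζ).neg.rexp
  refine Integrable.mono' (exp_neg_integrableOn_Ioi 0 hm)
    ((hcont.mono Ioi_subset_Ici_self).aestronglyMeasurable measurableSet_Ioi)
    ((ae_restrict_iff' measurableSet_Ioi).2 (.of_forall fun a ha => ?_))
  rw [survival, Real.norm_of_nonneg (Real.exp_pos _).le, Real.exp_le_exp, neg_mul, neg_le_neg_iff]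
  exact mul_le_intervalIntegral_of_le hζm hζ (le_of_lt ha)

end BoundedRate

theorem integral_survival_pos {ζ : ℝ → ℝ} (h : IntegrableOn (survival ζ) (Ioi 0)) :
    0 < ∫ a in Ioi (0:ℝ), survival ζ a :=
  haveI : NeZero (volume.restrict (Ioi (0:ℝ))) := ⟨by simp⟩
  integral_exp_pos h

/-- Integrated form of `∂ₐρ + ζρ = 0`, `ρ 0 = β (1 - ∫ ρ)`, with `E = survival ζ`. -/
def SolvesAgeEquation (β : ℝ) (E ρ : ℝ → ℝ) : Prop :=
  ∀ a, 0 ≤ a → ρ a = β * (1 - ∫ b in Ioi (0:ℝ), ρ b) * E a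

noncomputable def equilibriumMass (β : ℝ) (E : ℝ → ℝ) : ℝ :=
  β * (∫ a in Ioi (0:ℝ), E a) / (1 + β * ∫ a in Ioi (0:ℝ), E a)

section AgeEquation

variable {β : ℝ} {E ρ ρ' : ℝ → ℝ}

theorem SolvesAgeEquation.integral_eq (h : SolvesAgeEquation β E ρ)
    (hden : 1 + β * ∫ a in Ioi (0:ℝ), E a ≠ 0) :
    ∫ a in Ioi (0:ℝ), ρ a = equilibriumMass β E := by
  have hmass : ∫ a in Ioi (0:ℝ), ρ a =
      β * (1 - ∫ a in Ioi (0:ℝ), ρ a) * ∫ a in Ioi (0:ℝ), E a := by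
    rw [← integral_const_mul]
    exact setIntegral_congr_fun measurableSet_Ioi fun a ha => h a (le_of_lt ha)
  rw [equilibriumMass, eq_div_iff hden]
  linear_combination hmass

theorem SolvesAgeEquation.unique (h : SolvesAgeEquation β E ρ) (h' : SolvesAgeEquation β E ρ')
    (hden : 1 + β * ∫ a in Ioi (0:ℝ), E a ≠ 0) {a : ℝ} (ha : 0 ≤ a) : ρ' a = ρ a := by
  rw [h a ha, h' a ha, h.integral_eq hden, h'.integral_eq hden]

theorem solvesAgeEquation_equilibrium (hden : 1 + β * ∫ a in Ioi (0:ℝ), E a ≠ 0) :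
    SolvesAgeEquation β E fun a => β * (1 - equilibriumMass β E) * E a := by
  have hmass :
      ∫ a in Ioi (0:ℝ), β * (1 - equilibriumMass β E) * E a = equilibriumMass β E := by
    rw [integral_const_mul, equilibriumMass]
    field_simp
    ring
  intro a _
  rw [hmass]

theorem equilibriumMass_pos (hβE : 0 < β * ∫ a in Ioi (0:ℝ), E a) :
    0 < equilibriumMass β E :=
  div_pos hβE (by positivity)

theorem equilibriumMass_lt_one (hβE : 0 < β * ∫ a in Ioi (0:ℝ), E a) :
    equilibriumMass β E < 1 :=
  (div_lt_one (by positivity)).2 (lt_one_add _)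

end AgeEquation

/-- Well-posedness of the limit age-structured problem at a
frozen space-time point: there is a unique integrable `ρ` on `ℝ₊` with
`ρ(a) = β (1 − ∫₀^∞ ρ) exp(−∫₀^a ζ)` for all `a ≥ 0`; it is nonnegative and
its total mass `μ₀` satisfies `0 < μ₀ < 1`, explicitly `μ₀ = βI/(1+βI)` with
`I = ∫₀^∞ exp(−∫₀^a ζ) da`. -/
theorem stmt11
    (ζ : ℝ → ℝ) (hζm : Measurable ζ) (ζmin ζmax β : ℝ)
    (hζmin : 0 < ζmin) (hβ : 0 < β)
    (hζ : ∀ a, 0 ≤ a → ζmin ≤ ζ a ∧ ζ a ≤ ζmax) :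
    ∃ ρ : ℝ → ℝ,
      IntegrableOn ρ (Set.Ioi 0) ∧
      (∀ a, 0 ≤ a →
        ρ a = β * (1 - ∫ b in Set.Ioi (0:ℝ), ρ b) *
          Real.exp (-∫ s in (0:ℝ)..a, ζ s)) ∧
      (∀ a, 0 ≤ a → 0 ≤ ρ a) ∧
      (0 < ∫ a in Set.Ioi (0:ℝ), ρ a) ∧
      ((∫ a in Set.Ioi (0:ℝ), ρ a) < 1) ∧
      ((∫ a in Set.Ioi (0:ℝ), ρ a) =
        β * (∫ a in Set.Ioi (0:ℝ), Real.exp (-∫ s in (0:ℝ)..a, ζ s)) /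
          (1 + β * ∫ a in Set.Ioi (0:ℝ), Real.exp (-∫ s in (0:ℝ)..a, ζ s))) ∧
      (∀ ρ' : ℝ → ℝ, IntegrableOn ρ' (Set.Ioi 0) →
        (∀ a, 0 ≤ a →
          ρ' a = β * (1 - ∫ b in Set.Ioi (0:ℝ), ρ' b) *
            Real.exp (-∫ s in (0:ℝ)..a, ζ s)) →
        ∀ a, 0 ≤ a → ρ' a = ρ a) := by
  have hE := integrableOn_survival hζm hζmin hζ
  have hβE : 0 < β * ∫ a in Ioi (0:ℝ), survival ζ a := mul_pos hβ (integral_survival_pos hE)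
  have hden : 1 + β * ∫ a in Ioi (0:ℝ), survival ζ a ≠ 0 := by positivity
  have hsol := solvesAgeEquation_equilibrium hden
  have hmass := hsol.integral_eq hden
  refine ⟨_, hE.const_mul _, hsol, fun a _ => ?_, ?_, ?_, hmass,
    fun ρ' _ h' a ha => hsol.unique h' hden ha⟩
  · exact mul_nonneg (mul_nonneg hβ.le (sub_nonneg.2 (equilibriumMass_lt_one hβE).le))
      (Real.exp_pos _).le
  · rw [hmass]; exact equilibriumMass_pos hβE
  · rw [hmass]; exact equilibriumMass_lt_one hβE
end
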